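/- arXiv:2301.10498 — 7 statements merged into one kernel-verified Lean document; each statement's English description precedes it below -/
import Mathlib

section
/- Let (X_1, Y_1), …, (X_N, Y_N) be i.i.d. pairs with X_i ∈ ℝ^d, Y_i ∈ ℝ, E[Y_1^2] < ∞. Let r(x) = E[Y | X = x] be 1-Lipschitz, and assume Var(Y − r(X) | X = x) ≤ σ^2 for all x in the support. Let W_1(x), …, W_N(x) ∈ [0,1] be Borel measurable functions of x and X_1, …, X_N only, with ∑_{i=1}^N W_i(x) = 1, and set r̂_N(x) = ∑_{i=1}^N W_i(x) Y_i. Then for all s, t > 0, P(|r̂_N(x) − r(x)| ≥ t + s) ≤ σ^2 E[∑_{i=1}^N W_i(x)^2] / t^2 + P(∑_{i=1}^N W_i(x)‖X_i − x‖ ≥ s). -/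
/-!
Write `r̂_N(x) - r(x) = ∑ W_i (Y_i - r(X_i)) + ∑ W_i (r(X_i) - r(x))`. The weights form a
probability vector and `r` is 1-Lipschitz, so the second sum is at most `∑ W_i ‖X_i - x‖`, and it
remains to bound the noise term `M = ∑ W_i Z_i`, `Z_i = Y_i - r(X_i)`, by Chebyshev.
Every `W_k` is measurable with respect to `σ(X_i) ⊔ σ((X_k, Y_k) : k ≠ i)`, and since the pair
`(X_i, Y_i)` is independent of the other pairs, conditioning `Z_i` or `Z_i²` on this σ-algebra is
the same as conditioning on `X_i` alone. Hence the cross terms `E[W_i W_j Z_i Z_j]` vanish and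
`E[W_i² Z_i²] ≤ σ² E[W_i²]`, so `E[M²] ≤ σ² E[∑ W_i²]`.
-/

open MeasureTheory ProbabilityTheory

namespace MeasurableSpace

variable {Ω : Type*} {m₁ m₂ : MeasurableSpace Ω}

lemma isPiSystem_image2_inter :
    IsPiSystem (Set.image2 (· ∩ ·) {a | MeasurableSet[m₁] a} {b | MeasurableSet[m₂] b}) := by
  rintro _ ⟨a, ha, b, hb, rfl⟩ _ ⟨a', ha', b', hb', rfl⟩ -
  exact ⟨a ∩ a', ha.inter ha', b ∩ b', hb.inter hb', Set.inter_inter_inter_comm a a' b b'⟩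

lemma sup_eq_generateFrom_image2_inter :
    m₁ ⊔ m₂ = generateFrom (Set.image2 (· ∩ ·) {a | MeasurableSet[m₁] a}
      {b | MeasurableSet[m₂] b}) := by
  refine le_antisymm (sup_le (fun a ha => ?_) (fun b hb => ?_)) (generateFrom_le ?_)
  · exact measurableSet_generateFrom ⟨a, ha, Set.univ, MeasurableSet.univ, Set.inter_univ a⟩
  · exact measurableSet_generateFrom ⟨Set.univ, MeasurableSet.univ, b, hb, Set.univ_inter b⟩
  · rintro _ ⟨a, ha, b, hb, rfl⟩
    exact (le_sup_left (b := m₂) a ha).inter (le_sup_right (a := m₁) b hb)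

end MeasurableSpace

section CondExpIndep

variable {Ω : Type*} {m₁ m₂ mF m0 : MeasurableSpace Ω} {μ : Measure Ω} [IsProbabilityMeasure μ]
  {f g : Ω → ℝ}

lemma setIntegral_inter_eq_measureReal_mul_of_indep (hF : mF ≤ m0) (h₂ : m₂ ≤ m0)
    (hindep : Indep mF m₂ μ) (hf : StronglyMeasurable[mF] f) (hfi : Integrable f μ)
    {a b : Set Ω} (ha : MeasurableSet[mF] a) (hb : MeasurableSet[m₂] b) :
    ∫ ω in a ∩ b, f ω ∂μ = μ.real b * ∫ ω in a, f ω ∂μ := by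
  have hconst : μ[a.indicator f | m₂] =ᵐ[μ] fun _ => ∫ ω, a.indicator f ω ∂μ :=
    condExp_indep_eq hF h₂ (hf.indicator ha) hindep
  calc ∫ ω in a ∩ b, f ω ∂μ = ∫ ω in b, a.indicator f ω ∂μ := by
        rw [Set.inter_comm, setIntegral_indicator (hF a ha)]
    _ = ∫ ω in b, μ[a.indicator f | m₂] ω ∂μ :=
        (setIntegral_condExp h₂ (hfi.indicator (hF a ha)) hb).symm
    _ = μ.real b * ∫ ω in a, f ω ∂μ := by
        rw [setIntegral_congr_ae (h₂ b hb) (hconst.mono fun _ h _ => h), setIntegral_const,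
          integral_indicator (hF a ha), smul_eq_mul]

lemma condExp_sup_ae_eq_of_indep (hF : mF ≤ m0) (h₂ : m₂ ≤ m0) (h₁F : m₁ ≤ mF)
    (hindep : Indep mF m₂ μ) (hf : StronglyMeasurable[mF] f) (hfi : Integrable f μ) :
    μ[f | m₁ ⊔ m₂] =ᵐ[μ] μ[f | m₁] := by
  have h₁ : m₁ ≤ m0 := h₁F.trans hF
  have hsup : m₁ ⊔ m₂ ≤ m0 := sup_le h₁ h₂
  have hrect : ∀ a, MeasurableSet[m₁] a → ∀ b, MeasurableSet[m₂] b →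
      ∫ ω in a ∩ b, μ[f | m₁] ω ∂μ = ∫ ω in a ∩ b, f ω ∂μ := fun a ha b hb => by
    rw [setIntegral_inter_eq_measureReal_mul_of_indep hF h₂ hindep
      (stronglyMeasurable_condExp.mono h₁F) integrable_condExp (h₁F a ha) hb,
      setIntegral_condExp h₁ hfi ha,
      setIntegral_inter_eq_measureReal_mul_of_indep hF h₂ hindep hf hfi (h₁F a ha) hb]
  -- the two signed measures `s ↦ ∫ in s, ·` agree on the π-system of rectangles `a ∩ b`
  have hvec : (μ.withDensityᵥ (μ[f | m₁])).trim hsup = (μ.withDensityᵥ f).trim hsup := by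
    refine VectorMeasure.ext_of_generateFrom _ ?_ MeasurableSpace.sup_eq_generateFrom_image2_inter
      MeasurableSpace.isPiSystem_image2_inter ?_
    · rintro _ ⟨a, ha, b, hb, rfl⟩
      have hab : MeasurableSet[m₁ ⊔ m₂] (a ∩ b) :=
        (le_sup_left (b := m₂) a ha).inter (le_sup_right (a := m₁) b hb)
      rw [VectorMeasure.trim_measurableSet_eq _ hab, VectorMeasure.trim_measurableSet_eq _ hab,
        withDensityᵥ_apply integrable_condExp (hsup _ hab), withDensityᵥ_apply hfi (hsup _ hab)]
      exact hrect a ha b hb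
    · rw [VectorMeasure.trim_measurableSet_eq _ MeasurableSet.univ,
        VectorMeasure.trim_measurableSet_eq _ MeasurableSet.univ,
        withDensityᵥ_apply integrable_condExp MeasurableSet.univ,
        withDensityᵥ_apply hfi MeasurableSet.univ, setIntegral_univ, setIntegral_univ,
        integral_condExp h₁]
  refine (ae_eq_condExp_of_forall_setIntegral_eq hsup hfi
    (fun s _ _ => integrable_condExp.integrableOn) (fun s hs _ => ?_)
    (stronglyMeasurable_condExp.mono (le_sup_left : m₁ ≤ m₁ ⊔ m₂)).aestronglyMeasurable).symm
  have hs' := congrArg (fun v => v s) hvec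
  simpa only [VectorMeasure.trim_measurableSet_eq _ hs,
    withDensityᵥ_apply integrable_condExp (hsup _ hs), withDensityᵥ_apply hfi (hsup _ hs)] using hs'

lemma integral_mul_eq_integral_mul_condExp_of_indep (hF : mF ≤ m0) (h₂ : m₂ ≤ m0)
    (h₁F : m₁ ≤ mF) (hindep : Indep mF m₂ μ) (hf : StronglyMeasurable[mF] f)
    (hfi : Integrable f μ) (hg : StronglyMeasurable[m₁ ⊔ m₂] g)
    (hgf : Integrable (fun ω => g ω * f ω) μ) :
    ∫ ω, g ω * f ω ∂μ = ∫ ω, g ω * μ[f | m₁] ω ∂μ :=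
  calc ∫ ω, g ω * f ω ∂μ = ∫ ω, μ[g * f | m₁ ⊔ m₂] ω ∂μ :=
        (integral_condExp (sup_le (h₁F.trans hF) h₂)).symm
    _ = ∫ ω, g ω * μ[f | m₁] ω ∂μ := integral_congr_ae <|
        (condExp_mul_of_stronglyMeasurable_left hg hgf hfi).trans
          (Filter.EventuallyEq.rfl.mul (condExp_sup_ae_eq_of_indep hF h₂ h₁F hindep hf hfi))

lemma integral_mul_eq_zero_of_condExp_ae_eq_zero (hF : mF ≤ m0) (h₂ : m₂ ≤ m0)
    (h₁F : m₁ ≤ mF) (hindep : Indep mF m₂ μ) (hf : StronglyMeasurable[mF] f)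
    (hfi : Integrable f μ) (hg : StronglyMeasurable[m₁ ⊔ m₂] g)
    (hgf : Integrable (fun ω => g ω * f ω) μ) (hf0 : μ[f | m₁] =ᵐ[μ] 0) :
    ∫ ω, g ω * f ω ∂μ = 0 := by
  rw [integral_mul_eq_integral_mul_condExp_of_indep hF h₂ h₁F hindep hf hfi hg hgf]
  exact integral_eq_zero_of_ae (hf0.mono fun ω h => by simp [h])

lemma integral_mul_le_of_condExp_ae_le (hF : mF ≤ m0) (h₂ : m₂ ≤ m0)
    (h₁F : m₁ ≤ mF) (hindep : Indep mF m₂ μ) (hf : StronglyMeasurable[mF] f)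
    (hfi : Integrable f μ) (hg : StronglyMeasurable[m₁ ⊔ m₂] g)
    (hgf : Integrable (fun ω => g ω * f ω) μ) {C c : ℝ} (hg0 : ∀ ω, 0 ≤ g ω)
    (hgC : ∀ ω, g ω ≤ C) (hfc : μ[f | m₁] ≤ᵐ[μ] fun _ => c) :
    ∫ ω, g ω * f ω ∂μ ≤ c * ∫ ω, g ω ∂μ := by
  have hgm : AEStronglyMeasurable g μ := (hg.mono (sup_le (h₁F.trans hF) h₂)).aestronglyMeasurable
  have hgb : ∀ᵐ ω ∂μ, ‖g ω‖ ≤ C :=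
    .of_forall fun ω => by rw [Real.norm_of_nonneg (hg0 ω)]; exact hgC ω
  rw [integral_mul_eq_integral_mul_condExp_of_indep hF h₂ h₁F hindep hf hfi hg hgf,
    ← integral_const_mul]
  refine integral_mono_ae (integrable_condExp.bdd_mul hgm hgb)
    (((integrable_const C).mono' hgm hgb).const_mul c) ?_
  filter_upwards [hfc] with ω hω
  nlinarith [hg0 ω]

end CondExpIndep

section Orthogonal

variable {Ω ι : Type*} {m0 : MeasurableSpace Ω} {μ : Measure Ω}

lemma integral_sq_sum_of_orthogonal (s : Finset ι) {a : ι → Ω → ℝ} (ha : ∀ i, MemLp (a i) 2 μ)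
    (horth : ∀ i j, i ≠ j → ∫ ω, a i ω * a j ω ∂μ = 0) :
    ∫ ω, (∑ i ∈ s, a i ω) ^ 2 ∂μ = ∑ i ∈ s, ∫ ω, a i ω ^ 2 ∂μ := by
  have hint : ∀ i j, Integrable (fun ω => a i ω * a j ω) μ := fun i j =>
    (ha i).integrable_mul (ha j)
  simp_rw [sq, Finset.sum_mul_sum]
  rw [integral_finsetSum _ fun i _ => integrable_finsetSum _ fun j _ => hint i j]
  refine Finset.sum_congr rfl fun i hi => ?_
  rw [integral_finsetSum _ fun j _ => hint i j]
  exact Finset.sum_eq_single_of_mem i hi fun j _ hji => horth i j hji.symm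

end Orthogonal

section IndepNoise

variable {Ω ι : Type*} {m0 : MeasurableSpace Ω} {μ : Measure Ω}
  {m 𝒢 : ι → MeasurableSpace Ω} {Z V : ι → Ω → ℝ} {C σ : ℝ}

lemma iSup_le_sup_iSup_compl (h𝒢 : ∀ i, 𝒢 i ≤ m i) (i : ι) :
    ⨆ k, 𝒢 k ≤ 𝒢 i ⊔ ⨆ k ∈ ({i}ᶜ : Set ι), m k := by
  refine iSup_le fun k => ?_
  by_cases hki : k = i
  · subst hki
    exact le_sup_left
  · exact ((h𝒢 k).trans (le_iSup₂ (f := fun k (_ : k ∈ ({i}ᶜ : Set ι)) => m k) k hki)).trans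
      le_sup_right

lemma indep_iSup_compl (hm : ∀ i, m i ≤ m0) (hind : iIndep m μ) (i : ι) :
    Indep (m i) (⨆ k ∈ ({i}ᶜ : Set ι), m k) μ := by
  simpa only [iSup_singleton] using
    indep_iSup_of_disjoint hm hind (S := {i}) (T := {i}ᶜ) disjoint_compl_right

variable (hm : ∀ i, m i ≤ m0) (hind : iIndep m μ) (h𝒢 : ∀ i, 𝒢 i ≤ m i)
  (hZm : ∀ i, StronglyMeasurable[m i] (Z i)) (hZ2 : ∀ i, MemLp (Z i) 2 μ)
  (hV : ∀ i, StronglyMeasurable[⨆ k, 𝒢 k] (V i)) (hVC : ∀ i ω, |V i ω| ≤ C)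
include hm h𝒢 hV hVC

lemma memLp_top_weight (i : ι) : MemLp (V i) ⊤ μ :=
  memLp_top_of_bound ((hV i).mono (iSup_le fun k => (h𝒢 k).trans (hm k))).aestronglyMeasurable C
    (.of_forall (hVC i))

include hZ2 in
lemma memLp_two_mul_noise (i : ι) : MemLp (fun ω => V i ω * Z i ω) 2 μ :=
  (hZ2 i).mul' (memLp_top_weight hm h𝒢 hV hVC i)

variable [IsProbabilityMeasure μ]

include hind hZm hZ2

lemma integral_mul_noise_mul_noise_eq_zero (hZ0 : ∀ i, μ[Z i | 𝒢 i] =ᵐ[μ] 0) {i j : ι}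
    (hij : i ≠ j) : ∫ ω, (V i ω * Z i ω) * (V j ω * Z j ω) ∂μ = 0 := by
  have hsub := iSup_le_sup_iSup_compl h𝒢 i
  have hZj : StronglyMeasurable[𝒢 i ⊔ ⨆ k ∈ ({i}ᶜ : Set ι), m k] (Z j) :=
    ((hZm j).mono (le_iSup₂ (f := fun k (_ : k ∈ ({i}ᶜ : Set ι)) => m k) j hij.symm)).mono
      le_sup_right
  have hint := (memLp_two_mul_noise hm h𝒢 hZ2 hV hVC i).integrable_mul
    (memLp_two_mul_noise hm h𝒢 hZ2 hV hVC j)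
  calc ∫ ω, (V i ω * Z i ω) * (V j ω * Z j ω) ∂μ
      = ∫ ω, (V i ω * V j ω * Z j ω) * Z i ω ∂μ := by congr 1; ext ω; ring
    _ = 0 := integral_mul_eq_zero_of_condExp_ae_eq_zero (hm i) (iSup₂_le fun k _ => hm k) (h𝒢 i)
        (indep_iSup_compl hm hind i) (hZm i) ((hZ2 i).integrable one_le_two)
        ((((hV i).mono hsub).mul ((hV j).mono hsub)).mul hZj)
        (hint.congr (.of_forall fun ω => by simp only [Pi.mul_apply]; ring)) (hZ0 i)

lemma integral_sq_mul_noise_le (hvar : ∀ i, μ[fun ω => Z i ω ^ 2 | 𝒢 i] ≤ᵐ[μ] fun _ => σ ^ 2)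
    (i : ι) : ∫ ω, (V i ω * Z i ω) ^ 2 ∂μ ≤ σ ^ 2 * ∫ ω, V i ω ^ 2 ∂μ := by
  have hsub := iSup_le_sup_iSup_compl h𝒢 i
  calc ∫ ω, (V i ω * Z i ω) ^ 2 ∂μ = ∫ ω, V i ω ^ 2 * Z i ω ^ 2 ∂μ := by simp_rw [mul_pow]
    _ ≤ σ ^ 2 * ∫ ω, V i ω ^ 2 ∂μ := integral_mul_le_of_condExp_ae_le (hm i)
        (iSup₂_le fun k _ => hm k) (h𝒢 i) (indep_iSup_compl hm hind i) ((hZm i).pow 2)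
        (hZ2 i).integrable_sq (((hV i).mono hsub).pow 2)
        ((memLp_two_mul_noise hm h𝒢 hZ2 hV hVC i).integrable_sq.congr
          (.of_forall fun ω => by simp only [Pi.pow_apply]; ring))
        (fun ω => sq_nonneg _) (fun ω => sq_le_sq' (abs_le.mp (hVC i ω)).1 (abs_le.mp (hVC i ω)).2)
        (hvar i)

theorem integral_sq_sum_mul_noise_le [Fintype ι] (hZ0 : ∀ i, μ[Z i | 𝒢 i] =ᵐ[μ] 0)
    (hvar : ∀ i, μ[fun ω => Z i ω ^ 2 | 𝒢 i] ≤ᵐ[μ] fun _ => σ ^ 2) :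
    ∫ ω, (∑ i, V i ω * Z i ω) ^ 2 ∂μ ≤ σ ^ 2 * ∫ ω, ∑ i, V i ω ^ 2 ∂μ := by
  have hV2 : ∀ i, Integrable (fun ω => V i ω ^ 2) μ := fun i =>
    ((memLp_top_weight hm h𝒢 hV hVC i).mono_exponent le_top).integrable_sq
  rw [integral_sq_sum_of_orthogonal _ (memLp_two_mul_noise hm h𝒢 hZ2 hV hVC)
      fun i j => integral_mul_noise_mul_noise_eq_zero hm hind h𝒢 hZm hZ2 hV hVC hZ0,
    integral_finsetSum _ fun i _ => hV2 i, Finset.mul_sum]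
  exact Finset.sum_le_sum fun i _ =>
    integral_sq_mul_noise_le hm hind h𝒢 hZm hZ2 hV hVC hvar i

end IndepNoise

lemma abs_sum_mul_sub_le {ι E : Type*} [SeminormedAddCommGroup E] (s : Finset ι)
    {w y : ι → ℝ} {z : ι → E} {r : E → ℝ} (hr : LipschitzWith 1 r) (hw0 : ∀ i ∈ s, 0 ≤ w i)
    (hw1 : ∑ i ∈ s, w i = 1) (x : E) :
    |∑ i ∈ s, w i * y i - r x| ≤ |∑ i ∈ s, w i * (y i - r (z i))| + ∑ i ∈ s, w i * ‖z i - x‖ := by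
  have hsplit : ∑ i ∈ s, w i * y i - r x =
      ∑ i ∈ s, w i * (y i - r (z i)) + ∑ i ∈ s, w i * (r (z i) - r x) := by
    rw [← Finset.sum_add_distrib]
    simp only [sub_add_sub_cancel, mul_sub, Finset.sum_sub_distrib, ← Finset.sum_mul,
      hw1, one_mul]
  have hlip : |∑ i ∈ s, w i * (r (z i) - r x)| ≤ ∑ i ∈ s, w i * ‖z i - x‖ :=
    (Finset.abs_sum_le_sum_abs _ _).trans <| Finset.sum_le_sum fun i hi => by
      rw [abs_mul, abs_of_nonneg (hw0 i hi), ← dist_eq_norm, ← Real.dist_eq]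
      exact mul_le_mul_of_nonneg_left (by simpa using hr.dist_le_mul (z i) x) (hw0 i hi)
  rw [hsplit]
  exact (abs_add_le _ _).trans (add_le_add_right hlip _)

lemma measureReal_abs_ge_le_integral_sq_div {Ω : Type*} {m0 : MeasurableSpace Ω} {μ : Measure Ω}
    {f : Ω → ℝ} (hf : Integrable (fun ω => f ω ^ 2) μ) {t : ℝ} (ht : 0 < t) :
    μ.real {ω | t ≤ |f ω|} ≤ (∫ ω, f ω ^ 2 ∂μ) / t ^ 2 := by
  have hset : {ω | t ≤ |f ω|} = {ω | t ^ 2 ≤ f ω ^ 2} := by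
    ext ω
    rw [Set.mem_ofPred_eq, Set.mem_ofPred_eq, ← sq_abs (f ω), sq_le_sq₀ ht.le (abs_nonneg _)]
  rw [hset, le_div_iff₀ (by positivity), mul_comm]
  exact mul_meas_ge_le_integral_of_nonneg (.of_forall fun ω => sq_nonneg (f ω)) hf _

section CondExpSub

variable {Ω : Type*} {m m0 : MeasurableSpace Ω} {μ : Measure Ω} {Y R : Ω → ℝ}

lemma memLp_two_sub_of_condExp_ae_eq (hY : MemLp Y 2 μ)
    (hYR : μ[Y | m] =ᵐ[μ] R) : MemLp (fun ω => Y ω - R ω) 2 μ :=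
  hY.sub ((hY.condExp one_le_two).ae_eq hYR)

lemma condExp_sub_ae_eq_zero_of_condExp_ae_eq [IsFiniteMeasure μ] (hm : m ≤ m0)
    (hY : Integrable Y μ) (hR : StronglyMeasurable[m] R) (hYR : μ[Y | m] =ᵐ[μ] R) :
    μ[fun ω => Y ω - R ω | m] =ᵐ[μ] 0 := by
  have hRi : Integrable R μ := integrable_condExp.congr hYR
  filter_upwards [condExp_sub hY hRi m, hYR] with ω hsub hω
  change μ[Y - R | m] ω = 0
  rw [hsub, Pi.sub_apply, condExp_of_stronglyMeasurable hm hR hRi, hω, sub_self]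

end CondExpSub

section Regression

variable {Ω E ι : Type*} [MeasurableSpace E] {m0 : MeasurableSpace Ω}
  {μ : Measure Ω} {X : ι → Ω → E} {Y : ι → Ω → ℝ} {r : E → ℝ}
  {w : ι → (ι → E) → ℝ}

lemma stronglyMeasurable_iSup_comap_weight (hwmeas : ∀ i, Measurable (w i)) (i : ι) :
    StronglyMeasurable[⨆ k, MeasurableSpace.comap (X k) inferInstance]
      fun ω => w i (fun j => X j ω) := by
  let : MeasurableSpace Ω := ⨆ k, MeasurableSpace.comap (X k) inferInstance
  exact ((hwmeas i).comp (measurable_pi_lambda _ fun j => (comap_measurable (X j)).mono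
    (le_iSup (fun k => MeasurableSpace.comap (X k) inferInstance) j) le_rfl)).stronglyMeasurable

variable (hX : ∀ i, Measurable (X i)) (hY : ∀ i, Measurable (Y i))
  (hYL2 : ∀ i, MemLp (Y i) 2 μ)
  (hreg : ∀ i, μ[Y i | MeasurableSpace.comap (X i) inferInstance] =ᵐ[μ] fun ω => r (X i ω))
  (hwmeas : ∀ i, Measurable (w i)) (hw1 : ∀ i v, |w i v| ≤ 1)
include hX hY hYL2 hreg hwmeas hw1

variable [Fintype ι]

lemma memLp_two_sum_weight_mul_noise :
    MemLp (fun ω => ∑ i, w i (fun j => X j ω) * (Y i ω - r (X i ω))) 2 μ :=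
  memLp_finsetSum Finset.univ fun i _ => memLp_two_mul_noise
    (fun i => ((hX i).prodMk (hY i)).comap_le)
    (fun i => le_sup_left.trans (MeasurableSpace.comap_prodMk (X i) (Y i)).ge)
    (fun i => memLp_two_sub_of_condExp_ae_eq (hYL2 i) (hreg i))
    (stronglyMeasurable_iSup_comap_weight hwmeas) (fun i _ => hw1 i _) i

theorem integral_sq_sum_weight_mul_noise_le [IsProbabilityMeasure μ] (hr : Measurable r)
    (hindep : iIndepFun (fun i ω => (X i ω, Y i ω)) μ) {σ : ℝ}
    (hvar : ∀ i, μ[fun ω => (Y i ω - r (X i ω)) ^ 2 |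
      MeasurableSpace.comap (X i) inferInstance] ≤ᵐ[μ] fun _ => σ ^ 2) :
    ∫ ω, (∑ i, w i (fun j => X j ω) * (Y i ω - r (X i ω))) ^ 2 ∂μ ≤
      σ ^ 2 * ∫ ω, ∑ i, w i (fun j => X j ω) ^ 2 ∂μ :=
  integral_sq_sum_mul_noise_le (fun i => ((hX i).prodMk (hY i)).comap_le) hindep.iIndep
    (fun i => le_sup_left.trans (MeasurableSpace.comap_prodMk (X i) (Y i)).ge)
    (fun _ => ((measurable_snd.sub (hr.comp measurable_fst)).comp
      (comap_measurable _)).stronglyMeasurable)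
    (fun i => memLp_two_sub_of_condExp_ae_eq (hYL2 i) (hreg i))
    (stronglyMeasurable_iSup_comap_weight hwmeas) (fun i _ => hw1 i _)
    (fun i => condExp_sub_ae_eq_zero_of_condExp_ae_eq (hX i).comap_le
      ((hYL2 i).integrable one_le_two) (hr.comp (comap_measurable (X i))).stronglyMeasurable
      (hreg i))
    hvar

end Regression

theorem local_averaging_deviation_bound_general
    {Ω : Type*} [MeasureSpace Ω] [IsProbabilityMeasure (ℙ : Measure Ω)]
    (d N : ℕ) (hN : 1 ≤ N) (σ : ℝ)
    (X : Fin N → Ω → EuclideanSpace ℝ (Fin d)) (Y : Fin N → Ω → ℝ)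
    (hX : ∀ i, Measurable (X i)) (hY : ∀ i, Measurable (Y i))
    (hindep : iIndepFun (fun i ω => (X i ω, Y i ω)) ℙ)
    (hident : ∀ i, IdentDistrib (fun ω => (X i ω, Y i ω))
      (fun ω => (X ⟨0, hN⟩ ω, Y ⟨0, hN⟩ ω)) ℙ ℙ)
    (hY2 : Integrable (fun ω => (Y ⟨0, hN⟩ ω) ^ 2) ℙ)
    (r : EuclideanSpace ℝ (Fin d) → ℝ)
    (hLip : LipschitzWith 1 r)
    (hreg : ∀ i, ℙ[Y i | MeasurableSpace.comap (X i) inferInstance]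
      =ᵐ[ℙ] fun ω => r (X i ω))
    (hvar : ∀ i, ℙ[fun ω => (Y i ω - r (X i ω)) ^ 2 |
        MeasurableSpace.comap (X i) inferInstance] ≤ᵐ[ℙ] fun _ => σ ^ 2)
    (w : Fin N → (Fin N → EuclideanSpace ℝ (Fin d)) → ℝ)
    (hwmeas : ∀ i, Measurable (w i))
    (hw0 : ∀ i v, 0 ≤ w i v)
    (hwsum : ∀ v, ∑ i, w i v = 1)
    (x : EuclideanSpace ℝ (Fin d)) (s t : ℝ) (ht : 0 < t) :
    (ℙ {ω | t + s ≤ |(∑ i, w i (fun j => X j ω) * Y i ω) - r x|}).toReal ≤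
      σ ^ 2 * (∫ ω, ∑ i, (w i (fun j => X j ω)) ^ 2 ∂ℙ) / t ^ 2 +
        (ℙ {ω | s ≤ ∑ i, w i (fun j => X j ω) * ‖X i ω - x‖}).toReal := by
  have hYL2 : ∀ i, MemLp (Y i) 2 ℙ := fun i => ((hident i).comp measurable_snd).memLp_iff.mpr
    ((memLp_two_iff_integrable_sq (hY _).aestronglyMeasurable).mpr hY2)
  have hw1 : ∀ i v, |w i v| ≤ 1 := fun i v => abs_le.mpr ⟨by linarith [hw0 i v],
    hwsum v ▸ Finset.single_le_sum (fun j _ => hw0 j v) (Finset.mem_univ i)⟩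
  have hevent : {ω | t + s ≤ |(∑ i, w i (fun j => X j ω) * Y i ω) - r x|} ⊆
      {ω | t ≤ |∑ i, w i (fun j => X j ω) * (Y i ω - r (X i ω))|} ∪
        {ω | s ≤ ∑ i, w i (fun j => X j ω) * ‖X i ω - x‖} := fun ω hω => by
    have := abs_sum_mul_sub_le Finset.univ (w := fun i => w i (fun j => X j ω))
      (y := fun i => Y i ω) (z := fun i => X i ω) hLip (fun i _ => hw0 i _) (hwsum _) x
    by_contra h
    simp only [Set.mem_union, Set.mem_ofPred_eq, not_or, not_le] at h hω
    linarith
  rw [← measureReal_def, ← measureReal_def]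
  calc _ ≤ _ := (measureReal_mono hevent).trans (measureReal_union_le _ _)
    _ ≤ _ := by
      gcongr
      exact (measureReal_abs_ge_le_integral_sq_div (memLp_two_sum_weight_mul_noise hX hY hYL2
        hreg hwmeas hw1).integrable_sq ht).trans <| div_le_div_of_nonneg_right
          (integral_sq_sum_weight_mul_noise_le hX hY hYL2 hreg hwmeas hw1
            hLip.continuous.measurable hindep hvar) (sq_nonneg t)

/-- inequality (2.2) of Lemma 2.2 of the paper: deviation bound
for local averaging estimates, with weights depending only on the features.
The regression function `r` is a 1-Lipschitz version of `E[Y | X = ·]`, and the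
conditional variance of the noise is at most `σ²`. -/
theorem local_averaging_deviation_bound
    {Ω : Type*} [MeasureSpace Ω] [IsProbabilityMeasure (ℙ : Measure Ω)]
    (d N : ℕ) (hN : 1 ≤ N) (σ : ℝ)
    (X : Fin N → Ω → EuclideanSpace ℝ (Fin d)) (Y : Fin N → Ω → ℝ)
    (hX : ∀ i, Measurable (X i)) (hY : ∀ i, Measurable (Y i))
    (hindep : iIndepFun (fun i ω => (X i ω, Y i ω)) ℙ)
    (hident : ∀ i, IdentDistrib (fun ω => (X i ω, Y i ω))
      (fun ω => (X ⟨0, hN⟩ ω, Y ⟨0, hN⟩ ω)) ℙ ℙ)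
    (hY2 : Integrable (fun ω => (Y ⟨0, hN⟩ ω) ^ 2) ℙ)
    (r : EuclideanSpace ℝ (Fin d) → ℝ) (hr : Measurable r)
    (hLip : LipschitzWith 1 r)
    (hreg : ∀ i, ℙ[Y i | MeasurableSpace.comap (X i) inferInstance]
      =ᵐ[ℙ] fun ω => r (X i ω))
    (hvar : ∀ i, ℙ[fun ω => (Y i ω - r (X i ω)) ^ 2 |
        MeasurableSpace.comap (X i) inferInstance] ≤ᵐ[ℙ] fun _ => σ ^ 2)
    (w : Fin N → (Fin N → EuclideanSpace ℝ (Fin d)) → ℝ)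
    (hwmeas : ∀ i, Measurable (w i))
    (hw0 : ∀ i v, 0 ≤ w i v) (hw1 : ∀ i v, w i v ≤ 1)
    (hwsum : ∀ v, ∑ i, w i v = 1)
    (x : EuclideanSpace ℝ (Fin d)) (s t : ℝ) (hs : 0 < s) (ht : 0 < t) :
    (ℙ {ω | t + s ≤ |(∑ i, w i (fun j => X j ω) * Y i ω) - r x|}).toReal ≤
      σ ^ 2 * (∫ ω, ∑ i, (w i (fun j => X j ω)) ^ 2 ∂ℙ) / t ^ 2 +
        (ℙ {ω | s ≤ ∑ i, w i (fun j => X j ω) * ‖X i ω - x‖}).toReal :=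
  local_averaging_deviation_bound_general d N hN σ X Y hX hY hindep hident hY2 r hLip hreg hvar w
    hwmeas hw0 hwsum x s t ht
end

section
/- Let d ≥ 1, ρ > 0, and let μ be a probability measure on ℝ^d whose support S is bounded with diameter D > 0 and satisfies μ(B(x,ε)) ≥ ρ ε^d for all x ∈ S and all ε ∈ (0, D], where B(x,ε) is the closed Euclidean ball of center x and radius ε. Let X_1, …, X_N be i.i.d. with law μ, and for x ∈ S and i ∈ {1, …, N}, let D_{(i)}(x) denote the distance from x to its i-th nearest neighbor among X_1, …, X_N. Then E[D_{(i)}(x)] ≤ 2 (i / (ρ(N+1)))^{1/d}. -/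
/-!
Let `F = binomialCDF N i`, so that `F(p) = P(Bin(N, p) ≤ i)`, and let `R` be the distance from
`x` to its `(i+1)`-th nearest neighbour. `R > t` exactly when at most `i` of the independent
points fall in `closedBall x t`, so `P(R^d > s) = F(μ(closedBall x s^{1/d})) ≤ F(ρ s)` for
`0 < s ≤ D^d`, as `F` decreases on `[0, 1]`; beyond `D^d` the tail vanishes because the points
lie in `S`. By the layer-cake formula `E[R^d] ≤ ∫₀^{D^d} F(ρ s) ds ≤ ρ⁻¹ ∫₀¹ F = (i+1)/(ρ(N+1))`,
each Bernstein polynomial having integral `1/(N+1)`, and Jensen's inequality gives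
`E[R] ≤ E[R^d]^{1/d}`.
-/

open MeasureTheory ProbabilityTheory Finset

section Bernstein

open Polynomial

noncomputable def binomialCDF (n m : ℕ) : ℝ[X] :=
  ∑ k ∈ range (m + 1), bernsteinPolynomial ℝ n k

lemma bernsteinPolynomial_eval_nonneg {n k : ℕ} {x : ℝ} (h0 : 0 ≤ x) (h1 : x ≤ 1) :
    0 ≤ (bernsteinPolynomial ℝ n k).eval x := by
  have : 0 ≤ 1 - x := by linarith
  simp only [bernsteinPolynomial, eval_mul, eval_pow, eval_sub, eval_one, eval_X, eval_natCast]
  positivity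

lemma derivative_binomialCDF (n m : ℕ) :
    derivative (binomialCDF n m) = -(n : ℝ[X]) * bernsteinPolynomial ℝ (n - 1) m := by
  induction m with
  | zero => simp [binomialCDF, bernsteinPolynomial.derivative_zero]
  | succ m ih =>
    rw [binomialCDF, sum_range_succ, derivative_add, ← binomialCDF, ih,
      bernsteinPolynomial.derivative_succ]
    ring

lemma binomialCDF_eval_zero (n m : ℕ) : (binomialCDF n m).eval 0 = 1 := by
  simp [binomialCDF, eval_finsetSum, bernsteinPolynomial.eval_at_0]

lemma binomialCDF_eval_one {n m : ℕ} (h : m < n) : (binomialCDF n m).eval 1 = 0 := by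
  simp only [binomialCDF, eval_finsetSum, bernsteinPolynomial.eval_at_1]
  exact sum_eq_zero fun k hk => if_neg (by grind)

lemma binomialCDF_eval_nonneg (n m : ℕ) {x : ℝ} (h0 : 0 ≤ x) (h1 : x ≤ 1) :
    0 ≤ (binomialCDF n m).eval x := by
  rw [binomialCDF, eval_finsetSum]
  exact sum_nonneg fun k _ => bernsteinPolynomial_eval_nonneg h0 h1

lemma binomialCDF_antitoneOn (n m : ℕ) :
    AntitoneOn (fun x => (binomialCDF n m).eval x) (Set.Icc 0 1) := by
  refine antitoneOn_of_deriv_nonpos (convex_Icc 0 1) (Polynomial.continuousOn _)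
    (Polynomial.differentiableOn _) fun x hx => ?_
  rw [interior_Icc] at hx
  rw [Polynomial.deriv, derivative_binomialCDF]
  simp only [eval_mul, eval_neg, eval_natCast, neg_mul, neg_nonpos]
  exact mul_nonneg n.cast_nonneg (bernsteinPolynomial_eval_nonneg hx.1.le hx.2.le)

/-- `-(n + 1) • bernsteinPolynomial ℝ n k` is the derivative of `binomialCDF (n + 1) k`, which
falls from `1` at `0` to `0` at `1`. -/
lemma integral_bernsteinPolynomial {n k : ℕ} (h : k ≤ n) :
    ∫ x in (0 : ℝ)..1, (bernsteinPolynomial ℝ n k).eval x = 1 / (n + 1) := by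
  have hFTC := intervalIntegral.integral_eq_sub_of_hasDerivAt
    (fun x _ => (binomialCDF (n + 1) k).hasDerivAt x)
    ((binomialCDF (n + 1) k).derivative.continuous.intervalIntegrable 0 1)
  simp only [derivative_binomialCDF, eval_mul, eval_neg, eval_natCast, neg_mul,
    intervalIntegral.integral_neg, intervalIntegral.integral_const_mul, binomialCDF_eval_zero,
    binomialCDF_eval_one (Nat.lt_succ_of_le h), Nat.add_sub_cancel] at hFTC
  push_cast at hFTC
  field_simp
  linarith

lemma integral_binomialCDF {n m : ℕ} (h : m ≤ n) :
    ∫ x in (0 : ℝ)..1, (binomialCDF n m).eval x = (m + 1) / (n + 1) := by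
  simp only [binomialCDF, eval_finsetSum]
  rw [intervalIntegral.integral_finsetSum
      fun k _ => (Polynomial.continuous _).intervalIntegrable _ _,
    sum_congr rfl fun k hk => integral_bernsteinPolynomial (by grind), sum_const, card_range,
    nsmul_eq_mul]
  push_cast
  ring

end Bernstein

lemma Tuple.lt_sort_apply_iff {α : Type*} [LinearOrder α] {n : ℕ} (f : Fin n → α) (i : Fin n)
    (t : α) : t < f (Tuple.sort f i) ↔ #{j | f j ≤ t} ≤ i := by
  have hcard : #{j | f (Tuple.sort f j) ≤ t} = #{j | f j ≤ t} :=
    card_equiv (Tuple.sort f) (by simp)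
  rw [← hcard, ← not_lt, ← not_le]
  exact (Tuple.lt_card_le_iff_apply_le_of_monotone (f := f ∘ Tuple.sort f)
    (Tuple.monotone_sort f)).not.symm

section CountingIndependentHits

variable {Ω ι E : Type*} [Fintype ι] {X : ι → Ω → E} {C : Set E} [DecidablePred (· ∈ C)]

lemma setOf_filter_mem_eq_iInter [DecidableEq ι] (T : Finset ι) :
    {ω | ({j | X j ω ∈ C} : Finset ι) = T} = ⋂ j, X j ⁻¹' (if j ∈ T then C else Cᶜ) := by
  ext ω
  simp only [Set.mem_ofPred_eq, Set.mem_iInter, Set.mem_preimage, Finset.ext_iff, mem_filter,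
    mem_univ, true_and]
  refine forall_congr' fun j => ?_
  split_ifs with hj <;> simp [hj]

variable [MeasurableSpace Ω] [MeasurableSpace E]

lemma measurableSet_filter_mem_eq (hX : ∀ j, Measurable (X j)) (hC : MeasurableSet C)
    (T : Finset ι) : MeasurableSet {ω | ({j | X j ω ∈ C} : Finset ι) = T} := by
  classical
  rw [setOf_filter_mem_eq_iInter]
  exact .iInter fun j => hX j (by split_ifs <;> [exact hC; exact hC.compl])

lemma measurable_card_filter_mem (hX : ∀ j, Measurable (X j)) (hC : MeasurableSet C) :
    Measurable fun ω => #{j | X j ω ∈ C} := by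
  simp only [card_filter]
  exact Finset.measurable_sum _ fun j _ =>
    Measurable.ite ((hX j) hC) measurable_const measurable_const

variable {P : Measure Ω} [IsProbabilityMeasure P] {p : ℝ}

lemma ProbabilityTheory.iIndepFun.measureReal_filter_mem_eq (hX : ∀ j, Measurable (X j))
    (hind : iIndepFun X P) (hC : MeasurableSet C) (hp : ∀ j, P.real (X j ⁻¹' C) = p)
    (T : Finset ι) :
    P.real {ω | ({j | X j ω ∈ C} : Finset ι) = T} =
      p ^ #T * (1 - p) ^ (Fintype.card ι - #T) := by
  classical
  have hfactor : ∀ j, P.real (X j ⁻¹' (if j ∈ T then C else Cᶜ)) =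
      if j ∈ T then p else 1 - p := by
    intro j
    split_ifs
    · exact hp j
    · rw [Set.preimage_compl, probReal_compl_eq_one_sub ((hX j) hC), hp j]
  rw [setOf_filter_mem_eq_iInter, measureReal_def,
    hind.meas_iInter fun j => ⟨_, by split_ifs <;> [exact hC; exact hC.compl], rfl⟩,
    ENNReal.toReal_prod]
  simp only [← measureReal_def, hfactor]
  rw [prod_ite, prod_const, prod_const, filter_mem_eq_inter, univ_inter, filter_not,
    filter_mem_eq_inter, univ_inter, ← compl_eq_univ_sdiff, card_compl]

lemma ProbabilityTheory.iIndepFun.measureReal_card_filter_mem_eq (hX : ∀ j, Measurable (X j))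
    (hind : iIndepFun X P) (hC : MeasurableSet C) (hp : ∀ j, P.real (X j ⁻¹' C) = p) (k : ℕ) :
    P.real {ω | #{j | X j ω ∈ C} = k} = (bernsteinPolynomial ℝ (Fintype.card ι) k).eval p := by
  have hset : {ω | #{j | X j ω ∈ C} = k} =
      ⋃ T ∈ powersetCard k univ, {ω | ({j | X j ω ∈ C} : Finset ι) = T} := by
    ext ω
    simp
  rw [hset, measureReal_biUnion_finset
      (fun T _ T' _ h => Set.disjoint_left.2 fun ω hT hT' => h (hT.symm.trans hT'))
      fun T _ => measurableSet_filter_mem_eq hX hC T,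
    sum_congr rfl fun T hT => by
      rw [hind.measureReal_filter_mem_eq hX hC hp T, (mem_powersetCard.1 hT).2]]
  simp only [sum_const, card_powersetCard, card_univ, nsmul_eq_mul, bernsteinPolynomial,
    Polynomial.eval_mul, Polynomial.eval_natCast, Polynomial.eval_pow, Polynomial.eval_X,
    Polynomial.eval_sub, Polynomial.eval_one]
  ring

lemma ProbabilityTheory.iIndepFun.measureReal_card_filter_mem_le (hX : ∀ j, Measurable (X j))
    (hind : iIndepFun X P) (hC : MeasurableSet C) (hp : ∀ j, P.real (X j ⁻¹' C) = p) (m : ℕ) :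
    P.real {ω | #{j | X j ω ∈ C} ≤ m} = (binomialCDF (Fintype.card ι) m).eval p := by
  have hset : {ω | #{j | X j ω ∈ C} ≤ m} =
      ⋃ k ∈ range (m + 1), {ω | #{j | X j ω ∈ C} = k} := by
    ext ω
    simp
  rw [hset, measureReal_biUnion_finset
    (fun k _ k' _ h => Set.disjoint_left.2 fun ω hk hk' => h (hk.symm.trans hk'))
    fun k _ => measurableSet_eq_fun (measurable_card_filter_mem hX hC) measurable_const]
  simp [binomialCDF, Polynomial.eval_finsetSum, hind.measureReal_card_filter_mem_eq hX hC hp]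

end CountingIndependentHits

namespace MeasureTheory

variable {α : Type*} [MeasurableSpace α] {μ : Measure α} {f : α → ℝ}

lemma integral_le_intervalIntegral_of_measureReal_lt_le {c : ℝ} (hc : 0 ≤ c)
    (hfi : Integrable f μ) (hf0 : 0 ≤ᵐ[μ] f) (hfc : ∀ᵐ ω ∂μ, f ω ≤ c) {g : ℝ → ℝ}
    (hg : IntervalIntegrable g volume 0 c)
    (hfg : ∀ t ∈ Set.Ioc 0 c, μ.real {ω | t < f ω} ≤ g t) :
    ∫ ω, f ω ∂μ ≤ ∫ t in 0..c, g t := by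
  have htail : ∀ t ∈ Set.Ioi 0 \ Set.Ioc 0 c, μ.real {ω | t < f ω} = 0 := by
    intro t ht
    obtain ⟨-, hct⟩ : 0 < t ∧ c < t := by simpa using ht
    have hnull : μ {ω | t < f ω} = 0 :=
      measure_mono_null (fun ω hω => not_le.2 (hct.trans hω)) (ae_iff.1 hfc)
    rw [measureReal_def, hnull, ENNReal.toReal_zero]
  rw [hfi.integral_eq_integral_meas_lt hf0, intervalIntegral.integral_of_le hc,
    setIntegral_eq_of_subset_of_ae_sdiff_eq_zero nullMeasurableSet_Ioi Set.Ioc_subset_Ioi_self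
      (ae_of_all _ htail)]
  exact integral_mono_of_nonneg (ae_of_all _ fun t => measureReal_nonneg)
    ((intervalIntegrable_iff_integrableOn_Ioc_of_le hc).1 hg)
    (ae_restrict_of_forall_mem measurableSet_Ioc hfg)

lemma integral_le_integral_pow_rpow_one_div [IsProbabilityMeasure μ] {d : ℕ} (hd : d ≠ 0)
    (hf0 : 0 ≤ᵐ[μ] f) (hfi : Integrable f μ) (hfdi : Integrable (fun ω => f ω ^ d) μ) :
    ∫ ω, f ω ∂μ ≤ (∫ ω, f ω ^ d ∂μ) ^ ((1 : ℝ) / d) := by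
  have hJensen : (∫ ω, f ω ∂μ) ^ d ≤ ∫ ω, f ω ^ d ∂μ :=
    (convexOn_pow d).map_integral_le (continuous_pow d).continuousOn isClosed_Ici hf0 hfi hfdi
  calc ∫ ω, f ω ∂μ = ((∫ ω, f ω ∂μ) ^ d) ^ ((1 : ℝ) / d) := by
        rw [one_div, Real.pow_rpow_inv_natCast (integral_nonneg_of_ae hf0) hd]
    _ ≤ (∫ ω, f ω ^ d ∂μ) ^ ((1 : ℝ) / d) := by
        gcongr
        exact pow_nonneg (integral_nonneg_of_ae hf0) d

lemma integral_le_of_measureReal_lt_le_binomialCDF {n m : ℕ} {ρ c : ℝ} (hm : m ≤ n)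
    (hρ : 0 < ρ) (hc : 0 ≤ c) (hρc : ρ * c ≤ 1) (hfi : Integrable f μ) (hf0 : 0 ≤ᵐ[μ] f)
    (hfc : ∀ᵐ ω ∂μ, f ω ≤ c)
    (htail : ∀ s ∈ Set.Ioc 0 c, μ.real {ω | s < f ω} ≤ (binomialCDF n m).eval (ρ * s)) :
    ∫ ω, f ω ∂μ ≤ (m + 1) / (ρ * (n + 1)) := by
  calc ∫ ω, f ω ∂μ ≤ ∫ s in 0..c, (binomialCDF n m).eval (ρ * s) :=
        integral_le_intervalIntegral_of_measureReal_lt_le hc hfi hf0 hfc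
          (((Polynomial.continuous _).comp (continuous_const_mul ρ)).intervalIntegrable 0 c)
          htail
    _ = ρ⁻¹ * ∫ u in 0..ρ * c, (binomialCDF n m).eval u := by
        rw [intervalIntegral.integral_comp_mul_left (fun u => (binomialCDF n m).eval u) hρ.ne',
          mul_zero, smul_eq_mul]
    _ ≤ ρ⁻¹ * ∫ u in 0..1, (binomialCDF n m).eval u := by
        gcongr
        refine intervalIntegral.integral_mono_interval le_rfl (by positivity) hρc ?_
          ((Polynomial.continuous _).intervalIntegrable _ _)
        filter_upwards [ae_restrict_mem measurableSet_Ioc] with u hu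
        exact binomialCDF_eval_nonneg n m hu.1.le hu.2
    _ = (m + 1) / (ρ * (n + 1)) := by
        rw [integral_binomialCDF hm]
        field_simp

end MeasureTheory

section NearestNeighbor

open Metric

variable {Ω E : Type*} [NormedAddCommGroup E] {N : ℕ}

/-- `i : Fin N` is 0-based: this is the distance from `x` to its `(i+1)`-th nearest neighbour. -/
noncomputable def kthNearestDist (X : Fin N → Ω → E) (x : E) (i : Fin N) (ω : Ω) : ℝ :=
  ‖X (Tuple.sort (fun j => ‖X j ω - x‖) i) ω - x‖

variable {X : Fin N → Ω → E} {x : E} {i : Fin N}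

lemma kthNearestDist_nonneg (ω : Ω) : 0 ≤ kthNearestDist X x i ω :=
  norm_nonneg _

lemma lt_kthNearestDist_iff {t : ℝ} [DecidablePred (· ∈ closedBall x t)] (ω : Ω) :
    t < kthNearestDist X x i ω ↔ #{j | X j ω ∈ closedBall x t} ≤ i := by
  refine (Tuple.lt_sort_apply_iff (fun j => ‖X j ω - x‖) i t).trans ?_
  simp [dist_eq_norm]

lemma kthNearestDist_le_diam {S : Set E} (hS : Bornology.IsBounded S) (hx : x ∈ S) {ω : Ω}
    (hXS : ∀ j, X j ω ∈ S) : kthNearestDist X x i ω ≤ diam S := by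
  rw [kthNearestDist, ← dist_eq_norm]
  exact dist_le_diam_of_mem hS (hXS _) hx

variable [MeasurableSpace Ω] [MeasurableSpace E] [OpensMeasurableSpace E]

lemma measurable_kthNearestDist (hX : ∀ j, Measurable (X j)) :
    Measurable (kthNearestDist X x i) := by
  classical
  refine measurable_of_Ioi fun t => ?_
  simp_rw [Set.preimage, Set.mem_Ioi, lt_kthNearestDist_iff]
  exact measurable_card_filter_mem hX measurableSet_closedBall measurableSet_Iic

variable {P : Measure Ω} [IsProbabilityMeasure P] {μ : Measure E}

lemma measureReal_lt_kthNearestDist (hX : ∀ j, Measurable (X j)) (hind : iIndepFun X P)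
    (hlaw : ∀ j, P.map (X j) = μ) (t : ℝ) :
    P.real {ω | t < kthNearestDist X x i ω} =
      (binomialCDF N i).eval (μ.real (closedBall x t)) := by
  classical
  simp_rw [lt_kthNearestDist_iff]
  rw [hind.measureReal_card_filter_mem_le hX measurableSet_closedBall (fun j => ?_),
    Fintype.card_fin]
  rw [← hlaw j, map_measureReal_apply (hX j) measurableSet_closedBall]

lemma measureReal_lt_kthNearestDist_pow_le [IsProbabilityMeasure μ]
    (hX : ∀ j, Measurable (X j)) (hind : iIndepFun X P) (hlaw : ∀ j, P.map (X j) = μ)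
    {d : ℕ} (hd : d ≠ 0) {ρ D : ℝ} (hρ : 0 ≤ ρ) (hD : 0 ≤ D)
    (hmass : ∀ ε : ℝ, 0 < ε → ε ≤ D → ENNReal.ofReal (ρ * ε ^ d) ≤ μ (closedBall x ε))
    {s : ℝ} (hs : s ∈ Set.Ioc 0 (D ^ d)) :
    P.real {ω | s < kthNearestDist X x i ω ^ d} ≤ (binomialCDF N i).eval (ρ * s) := by
  set t := s ^ ((d : ℝ)⁻¹)
  have hts : t ^ d = s := Real.rpow_inv_natCast_pow hs.1.le hd
  have ht0 : 0 < t := Real.rpow_pos_of_pos hs.1 _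
  have htD : t ≤ D := (pow_le_pow_iff_left₀ ht0.le hD hd).1 (hts ▸ hs.2)
  have hevent : {ω | s < kthNearestDist X x i ω ^ d} = {ω | t < kthNearestDist X x i ω} := by
    ext ω
    rw [Set.mem_ofPred_eq, Set.mem_ofPred_eq, ← hts,
      pow_lt_pow_iff_left₀ ht0.le (kthNearestDist_nonneg ω) hd]
  have hball : ρ * s ≤ μ.real (closedBall x t) := by
    rw [← hts, measureReal_def, ← ENNReal.ofReal_le_iff_le_toReal (measure_ne_top _ _)]
    exact hmass t ht0 htD
  rw [hevent, measureReal_lt_kthNearestDist hX hind hlaw]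
  exact binomialCDF_antitoneOn N i ⟨mul_nonneg hρ hs.1.le, hball.trans measureReal_le_one⟩
    ⟨measureReal_nonneg, measureReal_le_one⟩ hball

end NearestNeighbor

theorem expected_nearest_neighbor_distance_general
    {Ω : Type*} [MeasureSpace Ω] [IsProbabilityMeasure (ℙ : Measure Ω)]
    (d N : ℕ) (hd : 1 ≤ d)
    (ρ D : ℝ) (hρ : 0 < ρ) (hD : 0 < D)
    (μ : Measure (EuclideanSpace ℝ (Fin d))) [IsProbabilityMeasure μ]
    (S : Set (EuclideanSpace ℝ (Fin d)))
    (hSfull : μ Sᶜ = 0)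
    (hSbdd : Bornology.IsBounded S) (hdiam : Metric.diam S = D)
    (hmass : ∀ x ∈ S, ∀ ε : ℝ, 0 < ε → ε ≤ D →
      ENNReal.ofReal (ρ * ε ^ d) ≤ μ (Metric.closedBall x ε))
    (X : Fin N → Ω → EuclideanSpace ℝ (Fin d)) (hX : ∀ i, Measurable (X i))
    (hindep : iIndepFun X ℙ)
    (hlaw : ∀ i, Measure.map (X i) ℙ = μ)
    (x : EuclideanSpace ℝ (Fin d)) (hx : x ∈ S) (i : Fin N) :
    ∫ ω, ‖X (Tuple.sort (fun j => ‖X j ω - x‖) i) ω - x‖ ∂ℙ ≤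
      2 * (((i.1 : ℝ) + 1) / (ρ * ((N : ℝ) + 1))) ^ ((1 : ℝ) / d) := by
  set M := ((i.1 : ℝ) + 1) / (ρ * ((N : ℝ) + 1))
  have hd0 : d ≠ 0 := Nat.one_le_iff_ne_zero.1 hd
  have hρD : ρ * D ^ d ≤ 1 :=
    ENNReal.ofReal_le_one.1 ((hmass x hx D hD le_rfl).trans prob_le_one)
  have hYD : ∀ᵐ ω ∂ℙ, kthNearestDist X x i ω ≤ D := by
    have hXS : ∀ᵐ ω ∂ℙ, ∀ j, X j ω ∈ S := ae_all_iff.2 fun j =>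
      ae_of_ae_map (hX j).aemeasurable (by rwa [hlaw j])
    filter_upwards [hXS] with ω hω
    exact hdiam ▸ kthNearestDist_le_diam hSbdd hx hω
  have hint : ∀ k : ℕ, Integrable (fun ω => kthNearestDist X x i ω ^ k) ℙ := fun k =>
    .of_bound ((measurable_kthNearestDist hX).pow_const k).aestronglyMeasurable (D ^ k) <| by
      filter_upwards [hYD] with ω hω
      rw [norm_pow, Real.norm_of_nonneg (kthNearestDist_nonneg ω)]
      exact pow_le_pow_left₀ (kthNearestDist_nonneg ω) hω k
  have hmoment : ∫ ω, kthNearestDist X x i ω ^ d ∂ℙ ≤ M :=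
    integral_le_of_measureReal_lt_le_binomialCDF i.is_lt.le hρ (by positivity) hρD (hint d)
      (ae_of_all _ fun ω => pow_nonneg (kthNearestDist_nonneg ω) d)
      (by filter_upwards [hYD] with ω hω; exact pow_le_pow_left₀ (kthNearestDist_nonneg ω) hω d)
      fun s hs => measureReal_lt_kthNearestDist_pow_le hX hindep hlaw hd0 hρ.le hD.le
        (hmass x hx) hs
  calc ∫ ω, kthNearestDist X x i ω ∂ℙ
      ≤ (∫ ω, kthNearestDist X x i ω ^ d ∂ℙ) ^ ((1 : ℝ) / d) :=
        integral_le_integral_pow_rpow_one_div hd0 (ae_of_all _ kthNearestDist_nonneg)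
          (by simpa using hint 1) (hint d)
    _ ≤ M ^ ((1 : ℝ) / d) :=
        Real.rpow_le_rpow (integral_nonneg fun ω => pow_nonneg (kthNearestDist_nonneg ω) d)
          hmoment (by positivity)
    _ ≤ 2 * M ^ ((1 : ℝ) / d) :=
        le_mul_of_one_le_left (Real.rpow_nonneg (by positivity) _) one_le_two

/-- Lemma 3.1 of the paper: expected distance to the `(i+1)`-th
nearest neighbor (1-based index `i+1`).  The set `S` is the support of `μ`:
it is closed, carries all the mass, is bounded with diameter `D`, and
`μ(B(x,ε)) ≥ ρ ε^d` for every `x ∈ S` and `ε ∈ (0,D]`.  The `(i+1)`-th nearest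
neighbor distance from `x` is the `(i+1)`-th order statistic of the distances
`‖X j - x‖`, obtained through the sorting permutation `Tuple.sort`. -/
theorem expected_nearest_neighbor_distance
    {Ω : Type*} [MeasureSpace Ω] [IsProbabilityMeasure (ℙ : Measure Ω)]
    (d N : ℕ) (hd : 1 ≤ d) (hN : 1 ≤ N)
    (ρ D : ℝ) (hρ : 0 < ρ) (hD : 0 < D)
    (μ : Measure (EuclideanSpace ℝ (Fin d))) [IsProbabilityMeasure μ]
    (S : Set (EuclideanSpace ℝ (Fin d)))
    (hSclosed : IsClosed S) (hSfull : μ Sᶜ = 0)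
    (hSbdd : Bornology.IsBounded S) (hdiam : Metric.diam S = D)
    (hmass : ∀ x ∈ S, ∀ ε : ℝ, 0 < ε → ε ≤ D →
      ENNReal.ofReal (ρ * ε ^ d) ≤ μ (Metric.closedBall x ε))
    (X : Fin N → Ω → EuclideanSpace ℝ (Fin d)) (hX : ∀ i, Measurable (X i))
    (hindep : iIndepFun X ℙ)
    (hlaw : ∀ i, Measure.map (X i) ℙ = μ)
    (x : EuclideanSpace ℝ (Fin d)) (hx : x ∈ S) (i : Fin N) :
    ∫ ω, ‖X (Tuple.sort (fun j => ‖X j ω - x‖) i) ω - x‖ ∂ℙ ≤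
      2 * (((i.1 : ℝ) + 1) / (ρ * ((N : ℝ) + 1))) ^ ((1 : ℝ) / d) :=
  expected_nearest_neighbor_distance_general d N hd ρ D hρ hD μ S hSfull hSbdd hdiam hmass X hX
    hindep hlaw x hx i
end

section
/- Let d ≥ 1, N ≥ 1, and k ∈ {1, …, N}, and set v_i = (1 − (i−1)/N)^k − (1 − i/N)^k for i ∈ {1, …, N}. Then ∑_{i=1}^N v_i (i/(N+1))^{1/d} ≤ 2e k^{−1/d}. -/
/-!
Writing `T i = (1 - i/N)^k` for the probability that none of the `k` draws lands among the
`i` nearest points, the weights are `v i = T i - T (i+1)`: a probability vector whose mean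
rank `∑ v i (i+1)` telescopes to `∑_{i<N} T i`. Bounding `T i ≤ exp (-k/N)^i` and summing the
geometric series gives mean rank at most `e N / k`, and Jensen's inequality for the concave
map `x ↦ x^(1/d)` turns this into the bound `(e/k)^(1/d) ≤ e k^(-1/d)`.
-/

open Finset

open Real in
lemma sum_range_exp_neg_pow_le {t : ℝ} (ht : 0 < t) (n : ℕ) :
    ∑ i ∈ range n, exp (-t) ^ i ≤ exp t / t := by
  have hr : exp (-t) < 1 := exp_lt_one_iff.mpr (neg_lt_zero.mpr ht)
  have hgap : t ≤ exp t - 1 := by linarith [add_one_le_exp t]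
  calc ∑ i ∈ range n, exp (-t) ^ i
      ≤ exp (-t) ^ 0 / (1 - exp (-t)) := by
        rw [range_eq_Ico]; exact geom_sum_Ico_le_of_lt_one (exp_nonneg _) hr
    _ = exp t / (exp t - 1) := by
        rw [pow_zero, exp_neg]; field_simp
    _ ≤ exp t / t := by gcongr

lemma sum_range_sub_mul_add_one (f : ℕ → ℝ) (n : ℕ) :
    ∑ i ∈ range n, (f i - f (i + 1)) * ((i : ℝ) + 1) = ∑ i ∈ range n, f i - n * f n := by
  induction n with
  | zero => simp
  | succ n ih =>
    rw [sum_range_succ, ih, sum_range_succ]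
    push_cast
    ring

namespace BaggedOneNN

/-- Probability that `k` draws with replacement from `N` ranked points all miss the `i` nearest
ones; the weight of rank `i + 1` is `tail N k i - tail N k (i + 1)`. -/
noncomputable def tail (N k i : ℕ) : ℝ := (1 - (i : ℝ) / N) ^ k

variable {N k : ℕ}

lemma one_sub_div_nonneg {i : ℕ} (hi : i ≤ N) : 0 ≤ 1 - (i : ℝ) / N := by
  rw [sub_nonneg]
  exact div_le_one_of_le₀ (by exact_mod_cast hi) (Nat.cast_nonneg N)

lemma tail_zero : tail N k 0 = 1 := by simp [tail]

lemma tail_self (hN : N ≠ 0) (hk : k ≠ 0) : tail N k N = 0 := by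
  simp [tail, hN, hk]

lemma tail_succ_le {i : ℕ} (hi : i < N) : tail N k (i + 1) ≤ tail N k i := by
  unfold tail
  gcongr
  · exact_mod_cast one_sub_div_nonneg hi
  · exact_mod_cast Nat.le_succ i

lemma tail_le_exp_pow {i : ℕ} (hi : i ≤ N) : tail N k i ≤ Real.exp (-(k / N)) ^ i := by
  calc tail N k i ≤ Real.exp (-(i / N)) ^ k :=
        pow_le_pow_left₀ (one_sub_div_nonneg hi) (Real.one_sub_le_exp_neg _) k
    _ = Real.exp (-(k / N)) ^ i := by
        rw [← Real.exp_nat_mul, ← Real.exp_nat_mul]; ring_nf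

lemma sum_tail_le (hk : 0 < k) (hkN : k ≤ N) :
    ∑ i ∈ range N, tail N k i ≤ Real.exp 1 * N / k := by
  have hN : (0 : ℝ) < N := by exact_mod_cast hk.trans_le hkN
  have ht : (0 : ℝ) < k / N := by positivity
  have ht1 : (k : ℝ) / N ≤ 1 := div_le_one_of_le₀ (by exact_mod_cast hkN) hN.le
  calc ∑ i ∈ range N, tail N k i ≤ ∑ i ∈ range N, Real.exp (-(k / N)) ^ i :=
        sum_le_sum fun i hi ↦ tail_le_exp_pow (mem_range.mp hi).le
    _ ≤ Real.exp (k / N) / (k / N) := sum_range_exp_neg_pow_le ht N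
    _ ≤ Real.exp 1 / (k / N) := by gcongr
    _ = Real.exp 1 * N / k := by field_simp

lemma sum_weight_eq_one (hN : N ≠ 0) (hk : k ≠ 0) :
    ∑ i ∈ range N, (tail N k i - tail N k (i + 1)) = 1 := by
  rw [sum_range_sub', tail_zero, tail_self hN hk, sub_zero]

lemma sum_weight_mul_rank_le (hk : 0 < k) (hkN : k ≤ N) :
    ∑ i ∈ range N, (tail N k i - tail N k (i + 1)) * (((i : ℝ) + 1) / ((N : ℝ) + 1))
      ≤ Real.exp 1 / k := by
  have hN : N ≠ 0 := (hk.trans_le hkN).ne'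
  simp_rw [← mul_div_assoc, ← sum_div]
  rw [sum_range_sub_mul_add_one, tail_self hN hk.ne', mul_zero, sub_zero,
    div_le_div_iff₀ (by positivity) (by exact_mod_cast hk)]
  calc (∑ i ∈ range N, tail N k i) * k ≤ Real.exp 1 * N / k * k :=
        mul_le_mul_of_nonneg_right (sum_tail_le hk hkN) (Nat.cast_nonneg k)
    _ = Real.exp 1 * N := by field_simp
    _ ≤ Real.exp 1 * (N + 1) := by gcongr; linarith

end BaggedOneNN

open BaggedOneNN Real in
theorem bagged_one_nn_weights_bound_general
    (d N k : ℕ) (hk : 1 ≤ k) (hkN : k ≤ N) :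
    ∑ i : Fin N,
        ((1 - (i.1 : ℝ) / N) ^ k - (1 - ((i.1 : ℝ) + 1) / N) ^ k) *
          (((i.1 : ℝ) + 1) / ((N : ℝ) + 1)) ^ ((1 : ℝ) / d) ≤
      2 * Real.exp 1 * (k : ℝ) ^ (-(1 : ℝ) / d) := by
  set α : ℝ := 1 / d
  have hα0 : 0 ≤ α := by positivity
  have hα1 : α ≤ 1 := by simpa [α] using Nat.cast_inv_le_one (α := ℝ) d
  have hk0 : (0 : ℝ) < k := by exact_mod_cast hk
  set w : ℕ → ℝ := fun i ↦ tail N k i - tail N k (i + 1)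
  set x : ℕ → ℝ := fun i ↦ ((i : ℝ) + 1) / ((N : ℝ) + 1)
  have hw_nonneg : ∀ i ∈ range N, 0 ≤ w i := fun i hi ↦
    sub_nonneg.mpr (tail_succ_le (mem_range.mp hi))
  have hx_nonneg : ∀ i ∈ range N, x i ∈ Set.Ici 0 := fun i _ ↦
    Set.mem_Ici.mpr (by positivity)
  have hjensen : ∑ i ∈ range N, w i * x i ^ α ≤ (∑ i ∈ range N, w i * x i) ^ α := by
    simpa using (concaveOn_rpow hα0 hα1).le_map_sum hw_nonneg
      (sum_weight_eq_one (by omega) (by omega)) hx_nonneg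
  have hw (i : ℕ) : (1 - (i : ℝ) / N) ^ k - (1 - ((i : ℝ) + 1) / N) ^ k = w i := by
    simp [w, tail]
  simp only [hw]
  change ∑ i : Fin N, w i * x i ^ α ≤ _
  rw [Fin.sum_univ_eq_sum_range (fun i ↦ w i * x i ^ α) N, neg_div]
  calc ∑ i ∈ range N, w i * x i ^ α ≤ (∑ i ∈ range N, w i * x i) ^ α := hjensen
    _ ≤ (exp 1 / k) ^ α := rpow_le_rpow
        (sum_nonneg fun i hi ↦ mul_nonneg (hw_nonneg i hi) (hx_nonneg i hi))
        (sum_weight_mul_rank_le hk hkN) hα0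
    _ = exp 1 ^ α * (k : ℝ) ^ (-α) := by
        rw [div_rpow (exp_nonneg 1) hk0.le, rpow_neg hk0.le, div_eq_mul_inv]
    _ ≤ exp 1 * (k : ℝ) ^ (-α) := by
        gcongr; exact rpow_le_self_of_one_le (one_le_exp zero_le_one) hα1
    _ ≤ 2 * exp 1 * (k : ℝ) ^ (-α) := by
        gcongr; linarith [exp_pos 1]

/-- Lemma 3.2 of the paper: bound on the weighted sum of
rank powers for the bagged 1-nearest-neighbor weights (sampling with
replacement).  Here the index `i : Fin N` corresponds to the paper's
1-based index `i+1`, so `v i = (1 - i/N)^k - (1 - (i+1)/N)^k`. -/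
theorem bagged_one_nn_weights_bound
    (d N k : ℕ) (hd : 1 ≤ d) (hN : 1 ≤ N) (hk : 1 ≤ k) (hkN : k ≤ N) :
    ∑ i : Fin N,
        ((1 - (i.1 : ℝ) / N) ^ k - (1 - ((i.1 : ℝ) + 1) / N) ^ k) *
          (((i.1 : ℝ) + 1) / ((N : ℝ) + 1)) ^ ((1 : ℝ) / d) ≤
      2 * Real.exp 1 * (k : ℝ) ^ (-(1 : ℝ) / d) :=
  bagged_one_nn_weights_bound_general d N k hk hkN
end

section
/- For all integers d ≥ 2 and 1 ≤ j ≤ k ≤ N, one has (1/N) ∑_{i=1}^N (i/N)^{1/d} (1 − i/N)^{k−j} ≤ 2 ∫_0^1 x^{1/d} (1 − x)^{k−j} dx = 2 B(1/d + 1, k − j + 1). -/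
/-!
Each term of the Riemann sum is dominated by twice the integral over its own cell `[a, b]` of
the uniform partition. For `0 ≤ a ≤ b` and `0 ≤ p ≤ 1`,
`2 ∫_a^b x^p dx ≥ (p + 1) ∫_a^b x^p dx = b^p b - a^p a ≥ (b - a) b^p` as `a^p ≤ b^p`, and the
antitone factor `(1 - x)^{k-j}` is smallest at the right endpoint `b`.
-/

open Finset intervalIntegral

/-- The Beta function `B(a,b) = ∫_0^1 x^{a-1} (1-x)^{b-1} dx`. -/
noncomputable def betaFun (a b : ℝ) : ℝ :=
  ∫ x in (0:ℝ)..1, x ^ (a - 1) * (1 - x) ^ (b - 1)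

open MeasureTheory

theorem sub_mul_rpow_le_integral_rpow {a b p : ℝ} (ha : 0 ≤ a) (hab : a ≤ b) (hp : 0 ≤ p) :
    (b - a) * b ^ p ≤ (p + 1) * ∫ x in a..b, x ^ p := by
  have hb : 0 ≤ b := ha.trans hab
  have hpow : a ^ p ≤ b ^ p := Real.rpow_le_rpow ha hab hp
  rw [integral_rpow (Or.inl (by linarith)), mul_div_cancel₀ _ (by linarith),
    Real.rpow_add_one' hb (by linarith), Real.rpow_add_one' ha (by linarith)]
  nlinarith [mul_le_mul_of_nonneg_left hpow ha]

theorem sub_mul_rpow_mul_le_two_mul_integral {g : ℝ → ℝ} {a b p : ℝ} (ha : 0 ≤ a)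
    (hab : a ≤ b) (hp0 : 0 ≤ p) (hp1 : p ≤ 1) (hg : AntitoneOn g (Set.Icc a b))
    (hgb : 0 ≤ g b) :
    (b - a) * (b ^ p * g b) ≤ 2 * ∫ x in a..b, x ^ p * g x := by
  have hrpow : Continuous fun x : ℝ => x ^ p := Real.continuous_rpow_const hp0
  have hrpow_nonneg : ∀ x ∈ Set.Icc a b, 0 ≤ x ^ p := fun x hx =>
    Real.rpow_nonneg (ha.trans hx.1) p
  have hint : IntervalIntegrable (fun x => x ^ p * g x) volume a b :=
    (AntitoneOn.intervalIntegrable (by rwa [Set.uIcc_of_le hab])).continuousOn_mul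
      hrpow.continuousOn
  have hbound : (∫ x in a..b, x ^ p) * g b ≤ ∫ x in a..b, x ^ p * g x := by
    rw [← intervalIntegral.integral_mul_const]
    refine integral_mono_on hab ((hrpow.intervalIntegrable a b).mul_const _) hint fun x hx => ?_
    exact mul_le_mul_of_nonneg_left (hg hx ⟨hab, le_rfl⟩ hx.2) (hrpow_nonneg x hx)
  have hI : 0 ≤ ∫ x in a..b, x ^ p := integral_nonneg hab hrpow_nonneg
  calc (b - a) * (b ^ p * g b) = ((b - a) * b ^ p) * g b := by ring
    _ ≤ ((p + 1) * ∫ x in a..b, x ^ p) * g b := by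
        gcongr ?_ * _; exact sub_mul_rpow_le_integral_rpow ha hab hp0
    _ ≤ 2 * ((∫ x in a..b, x ^ p) * g b) := by
        rw [mul_assoc]; exact mul_le_mul_of_nonneg_right (by linarith) (mul_nonneg hI hgb)
    _ ≤ 2 * ∫ x in a..b, x ^ p * g x := mul_le_mul_of_nonneg_left hbound zero_le_two

theorem sum_integral_uniform_partition {f : ℝ → ℝ} {N : ℕ} (hN : N ≠ 0)
    (hf : IntervalIntegrable f volume 0 1) :
    ∑ i ∈ range N, ∫ x in (i / N : ℝ)..((i + 1) / N), f x = ∫ x in (0 : ℝ)..1, f x := by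
  have hN' : (0 : ℝ) < N := by positivity
  have hnode : ∀ i ≤ N, (i / N : ℝ) ∈ Set.uIcc 0 1 := fun i hi => by
    rw [Set.uIcc_of_le zero_le_one]
    exact ⟨by positivity, div_le_one_of_le₀ (by exact_mod_cast hi) hN'.le⟩
  have hsum := sum_integral_adjacent_intervals (a := fun i : ℕ => (i / N : ℝ)) (f := f)
    (μ := volume) fun i hi =>
      hf.mono_set (Set.uIcc_subset_uIcc (hnode i hi.le) (hnode (i + 1) hi))
  push_cast at hsum
  rwa [zero_div, div_self hN'.ne'] at hsum

theorem riemann_sum_rpow_mul_le_two_mul_integral {g : ℝ → ℝ} {p : ℝ} (hp0 : 0 ≤ p)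
    (hp1 : p ≤ 1) (hg : AntitoneOn g (Set.Icc 0 1)) (hg1 : 0 ≤ g 1) (N : ℕ) :
    1 / (N : ℝ) * ∑ i ∈ range N, ((i + 1) / N : ℝ) ^ p * g ((i + 1) / N) ≤
      2 * ∫ x in (0 : ℝ)..1, x ^ p * g x := by
  have hg0 : ∀ x ∈ Set.Icc (0 : ℝ) 1, 0 ≤ g x := fun x hx =>
    hg1.trans (hg hx ⟨zero_le_one, le_rfl⟩ hx.2)
  rcases N.eq_zero_or_pos with rfl | hN
  · simpa using integral_nonneg zero_le_one fun x hx =>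
      mul_nonneg (Real.rpow_nonneg hx.1 p) (hg0 x hx)
  have hN' : (0 : ℝ) < N := by positivity
  have hint : IntervalIntegrable (fun x => x ^ p * g x) volume 0 1 :=
    (AntitoneOn.intervalIntegrable (by rwa [Set.uIcc_of_le zero_le_one])).continuousOn_mul
      (Real.continuous_rpow_const hp0).continuousOn
  rw [mul_sum, ← sum_integral_uniform_partition hN.ne' hint, mul_sum]
  refine sum_le_sum fun i hi => ?_
  have hi : (i : ℝ) + 1 ≤ N := by exact_mod_cast mem_range.mp hi
  have hlo : (i / N : ℝ) ≤ (i + 1) / N := div_le_div_of_nonneg_right (by linarith) hN'.le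
  have hcell : Set.Icc (i / N : ℝ) ((i + 1) / N) ⊆ Set.Icc 0 1 :=
    Set.Icc_subset_Icc (by positivity) (div_le_one_of_le₀ hi hN'.le)
  have hterm := sub_mul_rpow_mul_le_two_mul_integral (by positivity) hlo hp0 hp1 (hg.mono hcell)
    (hg0 _ (hcell (Set.right_mem_Icc.mpr hlo)))
  rwa [show ((i : ℝ) + 1) / N - i / N = 1 / N by ring] at hterm

/-- `i : Fin N` stands for the paper's 1-based index `i + 1`. -/
theorem riemann_sum_beta_comparison_general
    (d j k N : ℕ) :
    ((1 / (N : ℝ)) * ∑ i : Fin N,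
        (((i.1 : ℝ) + 1) / N) ^ ((1 : ℝ) / d) * (1 - ((i.1 : ℝ) + 1) / N) ^ (k - j) ≤
      2 * ∫ x in (0:ℝ)..1, x ^ ((1 : ℝ) / d) * (1 - x) ^ (k - j)) ∧
    (∫ x in (0:ℝ)..1, x ^ ((1 : ℝ) / d) * (1 - x) ^ (k - j)) =
      betaFun ((1 : ℝ) / d + 1) (((k - j : ℕ) : ℝ) + 1) := by
  have hp1 : (1 : ℝ) / d ≤ 1 := by rw [one_div]; exact Nat.cast_inv_le_one d
  have hg : AntitoneOn (fun x : ℝ => (1 - x) ^ (k - j)) (Set.Icc 0 1) := fun x _ y hy hxy =>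
    pow_le_pow_left₀ (by linarith [hy.2]) (by linarith) _
  refine ⟨?_, integral_congr fun x _ => ?_⟩
  · rw [Fin.sum_univ_eq_sum_range (fun i => (((i : ℝ) + 1) / N) ^ ((1 : ℝ) / d) *
      (1 - ((i : ℝ) + 1) / N) ^ (k - j)) N]
    exact riemann_sum_rpow_mul_le_two_mul_integral (by positivity) hp1 hg (by simp) N
  · simp only [add_sub_cancel_right, Real.rpow_natCast]

/-- Lemma 8.1 of the paper: Riemann-sum comparison with the Beta
integral.  Here `i : Fin N` corresponds to the paper's 1-based index `i+1`. -/
theorem riemann_sum_beta_comparison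
    (d j k N : ℕ) (hd : 2 ≤ d) (hj : 1 ≤ j) (hjk : j ≤ k) (hkN : k ≤ N) :
    ((1 / (N : ℝ)) * ∑ i : Fin N,
        (((i.1 : ℝ) + 1) / N) ^ ((1 : ℝ) / d) * (1 - ((i.1 : ℝ) + 1) / N) ^ (k - j) ≤
      2 * ∫ x in (0:ℝ)..1, x ^ ((1 : ℝ) / d) * (1 - x) ^ (k - j)) ∧
    (∫ x in (0:ℝ)..1, x ^ ((1 : ℝ) / d) * (1 - x) ^ (k - j)) =
      betaFun ((1 : ℝ) / d + 1) (((k - j : ℕ) : ℝ) + 1) :=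
  riemann_sum_beta_comparison_general d j k N
end

section
/- For all integers d ≥ 2, k ≥ 1, and j ∈ {0, 1, …, k−1}, one has 1 / ((j+1) ∏_{ℓ=1}^{k−j} (1 + 1/(dℓ))) ≤ k^{−1/d}. Equivalently, for all integers p ≥ 0 and q ≥ 1, (1/d) ln(p+q) ≤ ln(p+1) + ∑_{ℓ=1}^{q} ln(1 + 1/(dℓ)). -/
open Finset

private lemma aux_sum (d : ℕ) (hd : 1 ≤ d) (q : ℕ) :
    (1 / (d : ℝ)) * Real.log ((q : ℝ) + 1) ≤
      ∑ ℓ ∈ Finset.Icc 1 q, Real.log (1 + 1 / ((d : ℝ) * ℓ)) := by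
  have hd0 : (0 : ℝ) < d := by exact_mod_cast hd
  induction q with
  | zero => simp
  | succ q ih =>
    rw [Finset.sum_Icc_succ_top (by omega : 1 ≤ q + 1)]
    have hq1 : (0 : ℝ) < (q : ℝ) + 1 := by positivity
    have hx : (0 : ℝ) < 1 / ((d : ℝ) * ((q : ℕ) + 1 : ℕ)) := by positivity
    set x : ℝ := 1 / ((d : ℝ) * ((q + 1 : ℕ) : ℝ)) with hxdef
    have hxpos : 0 < x := by rw [hxdef]; push_cast; positivity
    -- Bernoulli: (1+x)^d ≥ 1 + d*x = 1 + 1/(q+1)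
    have hbern : 1 + (d : ℝ) * x ≤ (1 + x) ^ d := by
      have := one_add_mul_le_pow (by linarith : (-2 : ℝ) ≤ x) d
      linarith
    have hdx : (d : ℝ) * x = 1 / ((q : ℝ) + 1) := by
      rw [hxdef]; push_cast
      field_simp
    have hkey : Real.log ((q : ℝ) + 2) - Real.log ((q : ℝ) + 1) ≤
        (d : ℝ) * Real.log (1 + x) := by
      have h1 : ((q : ℝ) + 2) / ((q : ℝ) + 1) ≤ (1 + x) ^ d := by
        rw [div_le_iff₀ hq1]
        have : (1 + (d : ℝ) * x) * ((q : ℝ) + 1) = (q : ℝ) + 2 := by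
          rw [hdx]; field_simp; ring
        nlinarith [pow_pos (by linarith : (0:ℝ) < 1 + x) d]
      have h2 : Real.log (((q : ℝ) + 2) / ((q : ℝ) + 1)) ≤ Real.log ((1 + x) ^ d) :=
        Real.log_le_log (by positivity) h1
      rw [Real.log_div (by linarith) (by linarith), Real.log_pow] at h2
      exact_mod_cast h2
    have hstep : (1 / (d : ℝ)) * Real.log ((q : ℝ) + 2) ≤
        (1 / (d : ℝ)) * Real.log ((q : ℝ) + 1) + Real.log (1 + x) := by
      rw [← sub_le_iff_le_add']
      rw [← mul_sub]
      rw [div_mul_eq_mul_div, one_mul, div_le_iff₀ hd0]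
      linarith [hkey]
    have hxcast : Real.log (1 + x) = Real.log (1 + 1 / ((d : ℝ) * ((q : ℕ) + 1 : ℕ))) := by
      rw [hxdef]
    push_cast at hxcast ⊢
    push_cast at ih
    rw [show ((q : ℝ) + 1 + 1) = (q : ℝ) + 2 from by ring]
    linarith [hstep, ih]

/-- STATEMENT 10 (Lemma 8.2 of the paper), together with its equivalent
logarithmic reformulation. -/
theorem product_rank_bound (d : ℕ) (hd : 2 ≤ d) :
    (∀ k : ℕ, 1 ≤ k → ∀ j : ℕ, j < k →
      1 / (((j : ℝ) + 1) * ∏ ℓ ∈ Finset.Icc 1 (k - j), (1 + 1 / ((d : ℝ) * ℓ))) ≤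
        (k : ℝ) ^ (-(1 : ℝ) / d)) ∧
    (∀ p q : ℕ, 1 ≤ q →
      (1 / (d : ℝ)) * Real.log ((p : ℝ) + q) ≤
        Real.log ((p : ℝ) + 1) + ∑ ℓ ∈ Finset.Icc 1 q, Real.log (1 + 1 / ((d : ℝ) * ℓ))) := by
  have hd1 : 1 ≤ d := by omega
  have hd0 : (0 : ℝ) < d := by exact_mod_cast hd1
  have part2 : ∀ p q : ℕ, 1 ≤ q →
      (1 / (d : ℝ)) * Real.log ((p : ℝ) + q) ≤
        Real.log ((p : ℝ) + 1) + ∑ ℓ ∈ Finset.Icc 1 q, Real.log (1 + 1 / ((d : ℝ) * ℓ)) := by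
    intro p q hq
    have hq0 : (0 : ℝ) < q := by exact_mod_cast hq
    have h1 : (p : ℝ) + q ≤ ((p : ℝ) + 1) * ((q : ℝ) + 1) := by nlinarith [Nat.cast_nonneg (α := ℝ) p]
    have hlog1 : Real.log ((p : ℝ) + q) ≤ Real.log ((p : ℝ) + 1) + Real.log ((q : ℝ) + 1) := by
      calc Real.log ((p : ℝ) + q) ≤ Real.log (((p : ℝ) + 1) * ((q : ℝ) + 1)) :=
            Real.log_le_log (by positivity) h1
        _ = Real.log ((p : ℝ) + 1) + Real.log ((q : ℝ) + 1) :=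
            Real.log_mul (by positivity) (by positivity)
    have hlogp : 0 ≤ Real.log ((p : ℝ) + 1) :=
      Real.log_nonneg (by linarith [Nat.cast_nonneg (α := ℝ) p])
    have haux := aux_sum d hd1 q
    have h2 : (1 / (d : ℝ)) * Real.log ((p : ℝ) + 1) ≤ Real.log ((p : ℝ) + 1) := by
      have : 1 / (d : ℝ) ≤ 1 := by
        rw [div_le_one hd0]; exact_mod_cast hd1
      nlinarith
    have h3 : (1 / (d : ℝ)) * Real.log ((p : ℝ) + q) ≤
        (1 / (d : ℝ)) * Real.log ((p : ℝ) + 1) + (1 / (d : ℝ)) * Real.log ((q : ℝ) + 1) := by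
      rw [← mul_add]
      apply mul_le_mul_of_nonneg_left hlog1 (by positivity)
    linarith
  refine ⟨?_, part2⟩
  intro k hk j hjk
  have hprodpos : (0 : ℝ) < ∏ ℓ ∈ Finset.Icc 1 (k - j), (1 + 1 / ((d : ℝ) * ℓ)) := by
    apply Finset.prod_pos
    intro ℓ hℓ
    have h1 : 1 ≤ ℓ := (Finset.mem_Icc.mp hℓ).1
    have : (0 : ℝ) < ℓ := by exact_mod_cast h1
    positivity
  have hjpos : (0 : ℝ) < (j : ℝ) + 1 := by positivity
  have hApos : (0 : ℝ) < ((j : ℝ) + 1) * ∏ ℓ ∈ Finset.Icc 1 (k - j), (1 + 1 / ((d : ℝ) * ℓ)) :=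
    mul_pos hjpos hprodpos
  have hk0 : (0 : ℝ) < k := by exact_mod_cast hk
  -- log of product
  have hlogprod : Real.log (∏ ℓ ∈ Finset.Icc 1 (k - j), (1 + 1 / ((d : ℝ) * ℓ))) =
      ∑ ℓ ∈ Finset.Icc 1 (k - j), Real.log (1 + 1 / ((d : ℝ) * ℓ)) := by
    apply Real.log_prod
    intro ℓ hℓ
    have h1 : 1 ≤ ℓ := (Finset.mem_Icc.mp hℓ).1
    have : (0 : ℝ) < ℓ := by exact_mod_cast h1
    positivity
  have hcast : (j : ℝ) + ((k - j : ℕ) : ℝ) = (k : ℝ) := by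
    have : j ≤ k := le_of_lt hjk
    push_cast [Nat.cast_sub this]
    ring
  have hmain := part2 j (k - j) (by omega)
  rw [hcast] at hmain
  -- so (1/d) log k ≤ log A
  have hlogA : (1 / (d : ℝ)) * Real.log (k : ℝ) ≤
      Real.log (((j : ℝ) + 1) * ∏ ℓ ∈ Finset.Icc 1 (k - j), (1 + 1 / ((d : ℝ) * ℓ))) := by
    rw [Real.log_mul (ne_of_gt hjpos) (ne_of_gt hprodpos), hlogprod]
    exact hmain
  have hrpow : (k : ℝ) ^ ((1 : ℝ) / d) ≤
      ((j : ℝ) + 1) * ∏ ℓ ∈ Finset.Icc 1 (k - j), (1 + 1 / ((d : ℝ) * ℓ)) := by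
    calc (k : ℝ) ^ ((1 : ℝ) / d) = Real.exp (Real.log (k : ℝ) * ((1 : ℝ) / d)) :=
          Real.rpow_def_of_pos hk0 _
      _ ≤ Real.exp (Real.log (((j : ℝ) + 1) * ∏ ℓ ∈ Finset.Icc 1 (k - j), (1 + 1 / ((d : ℝ) * ℓ)))) :=
          Real.exp_le_exp.mpr (by rw [mul_comm]; exact hlogA)
      _ = _ := Real.exp_log hApos
  have hneg : (k : ℝ) ^ (-(1 : ℝ) / d) = 1 / ((k : ℝ) ^ ((1 : ℝ) / d)) := by
    rw [neg_div, Real.rpow_neg (le_of_lt hk0)]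
    exact (one_div _).symm
  rw [hneg]
  apply one_div_le_one_div_of_le (Real.rpow_pos_of_pos hk0 _) hrpow
end

section
/- Let r ∈ ℝ, M ≥ 1 an integer, and let Î_1, …, Î_M be random closed bounded intervals of ℝ such that P(r ∈ Î_m) ≥ 1 − e^{−m} for every m ∈ {1, …, M}. Define m̂ = min{ m ∈ {1,…,M} : ⋂_{j=m}^{M} Î_j ≠ ∅ } and let r̃ be the midpoint of the interval ⋂_{j=m̂}^{M} Î_j. Then for every δ ∈ [e^{−M}/(1 − e^{−1}), 1), letting m_δ be the smallest integer m ∈ {1,…,M} with δ ≥ e^{−m}/(1 − e^{−1}), one has P(|r̃ − r| > |Î_{m_δ}|) ≤ δ, where |I| denotes the length of the interval I. -/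
/-!
On the event that `r ∈ Î_m` for every `m ∈ [m_δ, M]`, the intervals `Î_{m_δ}, …, Î_M` share the
point `r`, so `m̂ ≤ m_δ` and `⋂_{j ≥ m̂} Î_j ⊆ Î_{m_δ}`; both `r̃` and `r` then lie in `Î_{m_δ}`,
whence `|r̃ - r| ≤ |Î_{m_δ}|`. The complementary event has probability at most
`∑_{m ≥ m_δ} e^{-m} ≤ e^{-m_δ} / (1 - e^{-1}) ≤ δ` by the union bound.
-/

open MeasureTheory ProbabilityTheory

lemma sum_exp_neg_Icc_le (a b : ℕ) :
    ∑ m ∈ Finset.Icc a b, Real.exp (-(m : ℝ)) ≤ Real.exp (-(a : ℝ)) / (1 - Real.exp (-1)) := by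
  have hpow : ∀ m : ℕ, Real.exp (-(m : ℝ)) = Real.exp (-1) ^ m := fun m => by
    rw [← Real.exp_nat_mul]; ring_nf
  simp only [hpow]
  rw [← Finset.Ico_add_one_right_eq_Icc]
  exact geom_sum_Ico_le_of_lt_one (Real.exp_pos _).le (Real.exp_lt_one_iff.2 (by norm_num))

lemma abs_csInf_add_csSup_div_two_sub_le {S : Set ℝ} {a b r : ℝ} (hS : S.Nonempty)
    (hSab : S ⊆ Set.Icc a b) (hr : r ∈ Set.Icc a b) :
    |(sInf S + sSup S) / 2 - r| ≤ b - a := by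
  have hbdd : BddBelow S := ⟨a, fun x hx => (hSab hx).1⟩
  have hbdd' : BddAbove S := ⟨b, fun x hx => (hSab hx).2⟩
  have hinf : a ≤ sInf S := le_csInf hS fun x hx => (hSab hx).1
  have hsup : sSup S ≤ b := csSup_le hS fun x hx => (hSab hx).2
  have hle : sInf S ≤ sSup S := csInf_le_csSup hS hbdd hbdd'
  exact abs_sub_le_of_le_of_le (by linarith) (by linarith) hr.1 hr.2

lemma abs_midpoint_iInter_Icc_sub_le {A B : ℕ → ℝ} {M m mhat : ℕ} {r : ℝ} (hm : 1 ≤ m)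
    (hmM : m ≤ M)
    (hmhat : mhat = sInf {k | 1 ≤ k ∧ k ≤ M ∧
      (⋂ j ∈ Finset.Icc k M, Set.Icc (A j) (B j)).Nonempty})
    (hr : ∀ j ∈ Finset.Icc m M, r ∈ Set.Icc (A j) (B j)) :
    |(sInf (⋂ j ∈ Finset.Icc mhat M, Set.Icc (A j) (B j)) +
      sSup (⋂ j ∈ Finset.Icc mhat M, Set.Icc (A j) (B j))) / 2 - r| ≤ B m - A m := by
  have hm_mem : m ∈ {k | 1 ≤ k ∧ k ≤ M ∧
      (⋂ j ∈ Finset.Icc k M, Set.Icc (A j) (B j)).Nonempty} :=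
    ⟨hm, hmM, r, Set.mem_iInter₂.2 hr⟩
  obtain ⟨-, -, hne⟩ : mhat ∈ {k | 1 ≤ k ∧ k ≤ M ∧
      (⋂ j ∈ Finset.Icc k M, Set.Icc (A j) (B j)).Nonempty} :=
    hmhat ▸ Nat.sInf_mem ⟨m, hm_mem⟩
  have hmhat_le : mhat ≤ m := hmhat ▸ Nat.sInf_le hm_mem
  exact abs_csInf_add_csSup_div_two_sub_le hne
    (Set.biInter_subset_of_mem (Finset.mem_Icc.2 ⟨hmhat_le, hmM⟩))
    (hr m (Finset.mem_Icc.2 ⟨le_rfl, hmM⟩))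

lemma probReal_le_sum_one_sub_of_subset_biUnion_compl {Ω ι : Type*} [MeasurableSpace Ω]
    {μ : Measure Ω} [IsProbabilityMeasure μ] {s : Finset ι} {E : ι → Set Ω}
    (hE : ∀ i ∈ s, MeasurableSet (E i)) {F : Set Ω} (hF : F ⊆ ⋃ i ∈ s, (E i)ᶜ) :
    μ.real F ≤ ∑ i ∈ s, (1 - μ.real (E i)) :=
  calc μ.real F ≤ μ.real (⋃ i ∈ s, (E i)ᶜ) := measureReal_mono hF (measure_ne_top _ _)
    _ ≤ ∑ i ∈ s, μ.real (E i)ᶜ := measureReal_biUnion_finset_le s _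
    _ = ∑ i ∈ s, (1 - μ.real (E i)) :=
      Finset.sum_congr rfl fun i hi => probReal_compl_eq_one_sub (hE i hi)

theorem delta_independent_estimator_bound_general
    {Ω : Type*} [MeasureSpace Ω] [IsProbabilityMeasure (ℙ : Measure Ω)]
    (M : ℕ) (hM : 1 ≤ M) (r : ℝ)
    (A B : ℕ → Ω → ℝ)
    (hAmeas : ∀ m, Measurable (A m)) (hBmeas : ∀ m, Measurable (B m))
    (hconf : ∀ m ∈ Finset.Icc 1 M,
      1 - Real.exp (-(m : ℝ)) ≤ (ℙ {ω | r ∈ Set.Icc (A m ω) (B m ω)}).toReal)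
    (mhat : Ω → ℕ)
    (hmhat : ∀ ω, mhat ω = sInf {m | 1 ≤ m ∧ m ≤ M ∧
      (⋂ j ∈ Finset.Icc m M, Set.Icc (A j ω) (B j ω)).Nonempty})
    (rtilde : Ω → ℝ)
    (hrtilde : ∀ ω, rtilde ω =
      (sInf (⋂ j ∈ Finset.Icc (mhat ω) M, Set.Icc (A j ω) (B j ω)) +
        sSup (⋂ j ∈ Finset.Icc (mhat ω) M, Set.Icc (A j ω) (B j ω))) / 2)
    (δ : ℝ) (hδ1 : Real.exp (-(M : ℝ)) / (1 - Real.exp (-1)) ≤ δ)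
    (mδ : ℕ)
    (hmδ : mδ = sInf {m | 1 ≤ m ∧ m ≤ M ∧
      Real.exp (-(m : ℝ)) / (1 - Real.exp (-1)) ≤ δ}) :
    (ℙ {ω | B mδ ω - A mδ ω < |rtilde ω - r|}).toReal ≤ δ := by
  obtain ⟨hmδ1, hmδM, hmδδ⟩ : mδ ∈ {m | 1 ≤ m ∧ m ≤ M ∧
      Real.exp (-(m : ℝ)) / (1 - Real.exp (-1)) ≤ δ} :=
    hmδ ▸ Nat.sInf_mem ⟨M, hM, le_rfl, hδ1⟩
  set E : ℕ → Set Ω := fun m => {ω | r ∈ Set.Icc (A m ω) (B m ω)}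
  have hE : ∀ m, MeasurableSet (E m) := fun m =>
    (measurableSet_le (hAmeas m) measurable_const).inter
      (measurableSet_le measurable_const (hBmeas m))
  have hbad : {ω | B mδ ω - A mδ ω < |rtilde ω - r|} ⊆ ⋃ m ∈ Finset.Icc mδ M, (E m)ᶜ := by
    intro ω hω
    by_contra hgood
    simp only [Set.mem_iUnion, Set.mem_compl_iff, not_exists, not_not] at hgood
    change B mδ ω - A mδ ω < |rtilde ω - r| at hω
    rw [hrtilde] at hω
    exact (abs_midpoint_iInter_Icc_sub_le hmδ1 hmδM (hmhat ω) hgood).not_gt hω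
  calc (ℙ {ω | B mδ ω - A mδ ω < |rtilde ω - r|}).toReal
      ≤ ∑ m ∈ Finset.Icc mδ M, (1 - Measure.real ℙ (E m)) :=
        probReal_le_sum_one_sub_of_subset_biUnion_compl (fun m _ => hE m) hbad
    _ ≤ ∑ m ∈ Finset.Icc mδ M, Real.exp (-(m : ℝ)) := Finset.sum_le_sum fun m hm => by
        have := hconf m (Finset.mem_Icc.2 ⟨hmδ1.trans (Finset.mem_Icc.1 hm).1,
          (Finset.mem_Icc.1 hm).2⟩)
        simp only [Measure.real, E]
        linarith
    _ ≤ Real.exp (-(mδ : ℝ)) / (1 - Real.exp (-1)) := sum_exp_neg_Icc_le mδ M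
    _ ≤ δ := hmδδ

/-- Section 7 of the paper, inequality (7.1): from a family of
confidence intervals `Î_m = [A_m, B_m]`, `m = 1, …, M`, with respective levels
`1 - e^{-m}`, one builds the confidence-level-independent estimator `r̃` as the
midpoint of `⋂_{j = m̂}^M Î_j`, where `m̂` is the smallest `m` for which this
intersection is nonempty; the midpoint of a nonempty closed bounded interval
`I` is `(inf I + sup I)/2`, and `|Î_m| = B_m - A_m` is the length of `Î_m`. -/
theorem delta_independent_estimator_bound
    {Ω : Type*} [MeasureSpace Ω] [IsProbabilityMeasure (ℙ : Measure Ω)]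
    (M : ℕ) (hM : 1 ≤ M) (r : ℝ)
    (A B : ℕ → Ω → ℝ)
    (hAmeas : ∀ m, Measurable (A m)) (hBmeas : ∀ m, Measurable (B m))
    (hAB : ∀ m ∈ Finset.Icc 1 M, ∀ ω, A m ω ≤ B m ω)
    (hconf : ∀ m ∈ Finset.Icc 1 M,
      1 - Real.exp (-(m : ℝ)) ≤ (ℙ {ω | r ∈ Set.Icc (A m ω) (B m ω)}).toReal)
    (mhat : Ω → ℕ)
    (hmhat : ∀ ω, mhat ω = sInf {m | 1 ≤ m ∧ m ≤ M ∧
      (⋂ j ∈ Finset.Icc m M, Set.Icc (A j ω) (B j ω)).Nonempty})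
    (rtilde : Ω → ℝ)
    (hrtilde : ∀ ω, rtilde ω =
      (sInf (⋂ j ∈ Finset.Icc (mhat ω) M, Set.Icc (A j ω) (B j ω)) +
        sSup (⋂ j ∈ Finset.Icc (mhat ω) M, Set.Icc (A j ω) (B j ω))) / 2)
    (δ : ℝ) (hδ1 : Real.exp (-(M : ℝ)) / (1 - Real.exp (-1)) ≤ δ) (hδ2 : δ < 1)
    (mδ : ℕ)
    (hmδ : mδ = sInf {m | 1 ≤ m ∧ m ≤ M ∧
      Real.exp (-(m : ℝ)) / (1 - Real.exp (-1)) ≤ δ}) :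
    (ℙ {ω | B mδ ω - A mδ ω < |rtilde ω - r|}).toReal ≤ δ :=
  delta_independent_estimator_bound_general M hM r A B hAmeas hBmeas hconf mhat hmhat rtilde hrtilde
    δ hδ1 mδ hmδ
end

section
/- Let d ≥ 1, let 𝒞 = [−1/2, 1/2]^d, and define g : ℝ^d → ℝ by g(x) = dist(x, ∂𝒞) for x ∈ 𝒞 and g(x) = 0 otherwise, where ∂𝒞 is the boundary of 𝒞 and dist(x, ∂𝒞) = inf{‖x − y‖ : y ∈ ∂𝒞} with ‖·‖ the Euclidean norm. Then ∫_{ℝ^d} g(x)² dx = 1 / (2(d+1)(d+2)). -/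
/-!
On the cube `{x | ‖x‖_∞ ≤ 1/2}` the Euclidean distance to the boundary is `1/2 - ‖x‖_∞`: a
boundary point has some coordinate of absolute value `1/2`, which bounds the distance from below,
and pushing a largest coordinate of `x` out to `±1/2` attains the bound. Hence
`g x = max (1/2 - ‖x‖_∞) 0` depends only on the sup norm, and integrating in polar coordinates
for that norm turns `∫ g²` into the Beta integral `d 2^d ∫₀^{1/2} t^(d-1) (1/2 - t)² dt`.
-/

open MeasureTheory Metric Set WithLp

theorem exists_norm_apply_eq_pi_norm {ι : Type*} [Fintype ι] [Nonempty ι] {G : ι → Type*}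
    [∀ i, SeminormedAddGroup (G i)] (f : ∀ i, G i) : ∃ i, ‖f i‖ = ‖f‖ := by
  obtain ⟨i, hi⟩ := Finite.exists_max fun i => ‖f i‖
  exact ⟨i, le_antisymm (norm_le_pi_norm f i) ((pi_norm_le_iff_of_nonneg (norm_nonneg _)).2 hi)⟩

namespace PiLp

variable {p : ENNReal} {ι : Type*} [Fintype ι]

theorem norm_ofLp_le [Fact (1 ≤ p)] {β : ι → Type*} [∀ i, SeminormedAddCommGroup (β i)]
    (x : PiLp p β) : ‖ofLp x‖ ≤ ‖x‖ :=
  (pi_norm_le_iff_of_nonneg (norm_nonneg x)).2 (norm_apply_le x)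

theorem frontier_preimage_closedBall {β : ι → Type*} [∀ i, SeminormedAddCommGroup (β i)]
    [∀ i, NormedSpace ℝ (β i)] (a : ∀ i, β i) {r : ℝ} (hr : r ≠ 0) :
    frontier (ofLp ⁻¹' closedBall a r : Set (PiLp p β)) = ofLp ⁻¹' sphere a r := by
  change frontier (homeomorph p β ⁻¹' closedBall a r) = _
  rw [← Homeomorph.preimage_frontier, frontier_closedBall a hr]
  rfl

theorem setOf_forall_abs_le_eq_preimage_closedBall {r : ℝ} (hr : 0 ≤ r) :
    {x : PiLp p (fun _ : ι => ℝ) | ∀ i, |x i| ≤ r} = ofLp ⁻¹' closedBall 0 r := by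
  ext x
  simp [pi_norm_le_iff_of_nonneg hr]

theorem infDist_preimage_sphere [Fact (1 ≤ p)] [Nonempty ι] {r : ℝ}
    (x : PiLp p (fun _ : ι => ℝ)) (hx : ‖ofLp x‖ ≤ r) :
    infDist x (ofLp ⁻¹' sphere 0 r) = r - ‖ofLp x‖ := by
  classical
  obtain ⟨i, hi⟩ := exists_norm_apply_eq_pi_norm (ofLp x)
  rw [Real.norm_eq_abs] at hi
  obtain ⟨s, hs, hxs⟩ : ∃ s : ℝ, |s| = 1 ∧ s * |x i| = x i := by
    rcases abs_choice (x i) with h | h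
    exacts [⟨1, by simp, by simp [h]⟩, ⟨-1, by simp, by simp [h]⟩]
  set y := x + single p i (s * (r - |x i|))
  have hy : y ∈ ofLp ⁻¹' sphere 0 r := by
    have hyi : y i = s * r := by
      simp only [y, ofLp_add, Pi.add_apply, single_apply, ↓reduceIte]
      linear_combination hxs.symm
    have hr : 0 ≤ r := (norm_nonneg _).trans hx
    have hyi_abs : |y i| = r := by rw [hyi, abs_mul, hs, one_mul, abs_of_nonneg hr]
    have hyj : ∀ j, |y j| ≤ r := fun j => by
      by_cases hj : j = i
      · rw [hj, hyi_abs]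
      · simp only [y, ofLp_add, Pi.add_apply, single_apply, if_neg hj, add_zero]
        exact (norm_le_pi_norm (ofLp x) j).trans hx
    rw [mem_preimage, mem_sphere_zero_iff_norm]
    exact le_antisymm ((pi_norm_le_iff_of_nonneg hr).2 hyj) (hyi_abs ▸ norm_le_pi_norm (ofLp y) i)
  refine le_antisymm ?_ ((le_infDist ⟨y, hy⟩).2 fun z hz => ?_)
  · calc infDist x _ ≤ dist x y := infDist_le_dist_of_mem hy
      _ = r - ‖ofLp x‖ := by
        rw [dist_eq_norm, sub_add_cancel_left, norm_neg, norm_single, Real.norm_eq_abs, abs_mul,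
          hs, one_mul, abs_of_nonneg (by linarith), hi]
  · have hz : ‖ofLp z‖ = r := by simpa using hz
    calc r - ‖ofLp x‖ = ‖ofLp z‖ - ‖ofLp x‖ := by rw [hz]
      _ ≤ ‖ofLp z - ofLp x‖ := norm_sub_norm_le _ _
      _ ≤ ‖z - x‖ := norm_ofLp_le (z - x)
      _ = dist x z := by rw [dist_comm, dist_eq_norm]

theorem indicator_infDist_frontier_preimage_closedBall [Fact (1 ≤ p)] [Nonempty ι] {r : ℝ}
    (hr : 0 < r) :
    (ofLp ⁻¹' closedBall 0 r).indicator
        (fun x : PiLp p (fun _ : ι => ℝ) => infDist x (frontier (ofLp ⁻¹' closedBall 0 r))) =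
      fun x => max (r - ‖ofLp x‖) 0 := by
  ext x
  rw [frontier_preimage_closedBall 0 hr.ne']
  by_cases hx : ‖ofLp x‖ ≤ r
  · rw [indicator_of_mem (by simpa using hx), infDist_preimage_sphere x hx,
      max_eq_left (by linarith)]
  · rw [indicator_of_notMem (by simpa using hx), max_eq_right (by linarith)]

end PiLp

theorem intervalIntegral.integral_pow_mul_sub_sq (n : ℕ) (r : ℝ) :
    ∫ y in (0 : ℝ)..r, y ^ n * (r - y) ^ 2 = 2 * r ^ (n + 3) / ((n + 1) * (n + 2) * (n + 3)) := by
  have hexpand : (fun y : ℝ => y ^ n * (r - y) ^ 2) =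
      fun y => r ^ 2 * y ^ n - 2 * r * y ^ (n + 1) + y ^ (n + 2) := by
    ext y; ring
  rw [hexpand, intervalIntegral.integral_add, intervalIntegral.integral_sub,
    intervalIntegral.integral_const_mul, intervalIntegral.integral_const_mul]
  · simp only [integral_pow]
    push_cast
    field_simp
    ring
  all_goals exact Continuous.intervalIntegrable (by fun_prop) _ _

open Module in
theorem integral_max_sub_norm_sq {E : Type*} [NormedAddCommGroup E] [NormedSpace ℝ E]
    [MeasurableSpace E] [BorelSpace E] [FiniteDimensional ℝ E] [Nontrivial E]
    (μ : Measure E) [μ.IsAddHaarMeasure] {r : ℝ} (hr : 0 ≤ r) :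
    ∫ x, max (r - ‖x‖) 0 ^ 2 ∂μ =
      μ.real (ball 0 1) * (2 * r ^ (finrank ℝ E + 2) / ((finrank ℝ E + 1) * (finrank ℝ E + 2))) := by
  obtain ⟨n, hn⟩ : ∃ n, finrank ℝ E = n + 1 := Nat.exists_eq_succ_of_ne_zero finrank_pos.ne'
  have hradial :
      ∫ y in Ioi 0, y ^ n • max (r - y) 0 ^ 2 = ∫ y in (0 : ℝ)..r, y ^ n * (r - y) ^ 2 := by
    rw [intervalIntegral.integral_of_le hr, setIntegral_eq_of_subset_of_forall_sdiff_eq_zero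
      measurableSet_Ioi Ioc_subset_Ioi_self]
    · refine setIntegral_congr_fun measurableSet_Ioc fun y hy => ?_
      rw [smul_eq_mul, max_eq_left (by linarith [hy.2])]
    · intro y hy
      have hry : r < y := not_le.1 fun h => hy.2 ⟨hy.1, h⟩
      rw [max_eq_right (by linarith), zero_pow two_ne_zero, smul_zero]
  rw [integral_fun_norm_addHaar μ (fun t => max (r - t) 0 ^ 2), hn, Nat.add_sub_cancel, hradial,
    intervalIntegral.integral_pow_mul_sub_sq]
  simp only [nsmul_eq_mul, smul_eq_mul]
  push_cast
  field_simp
  ring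

/-- equation (6.1) of the paper: the squared distance to the
boundary of the cube `𝒞 = [-1/2,1/2]^d`, extended by `0` outside `𝒞`,
integrates to `1/(2(d+1)(d+2))`. -/
theorem integral_sq_dist_to_boundary_cube
    (d : ℕ) (hd : 1 ≤ d)
    (C : Set (EuclideanSpace ℝ (Fin d)))
    (hC : C = {x : EuclideanSpace ℝ (Fin d) | ∀ t, |x t| ≤ 1 / 2})
    (g : EuclideanSpace ℝ (Fin d) → ℝ)
    (hg : g = C.indicator fun x => Metric.infDist x (frontier C)) :
    ∫ x, g x ^ 2 = 1 / (2 * ((d : ℝ) + 1) * ((d : ℝ) + 2)) := by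
  have : Nonempty (Fin d) := ⟨⟨0, hd⟩⟩
  subst hC hg
  rw [PiLp.setOf_forall_abs_le_eq_preimage_closedBall (by norm_num),
    PiLp.indicator_infDist_frontier_preimage_closedBall (by norm_num),
    (PiLp.volume_preserving_ofLp (Fin d)).integral_comp
      (MeasurableEquiv.toLp 2 _).symm.measurableEmbedding (fun y => max (1 / 2 - ‖y‖) 0 ^ 2),
    integral_max_sub_norm_sq volume (by norm_num), measureReal_def,
    Real.volume_pi_ball 0 one_pos, Module.finrank_fin_fun, Fintype.card_fin,
    ENNReal.toReal_ofReal (by positivity), mul_one, one_div, inv_pow]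
  field_simp
  ring
end
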